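/- arXiv:2507.13990 — 4 statements merged into one kernel-verified Lean document; each statement's English description precedes it below -/
import Mathlib

section
/- Under Assumption A, if (u,ℓ) is a solution of the free boundary problem (FBP), then the boundary trajectory t ↦ ℓ_t is nondecreasing on [0,∞). -/
/-!
Suppose `ℓ t < c < ℓ s` for some `s < t`. Right-continuity of `ℓ` yields a last time `α ∈ (s, t]`
at which `ℓ` reaches `c`, and a window `[α, b]` on which `ℓ ≤ c`. At time `α` all the mass lies
in `A = {F > c}`, and on `A` the solution is nondecreasing in time throughout the window, since
its time derivative is a nonnegative integral. Conservation of mass then forces `u` to be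
constant in time on `A`, so the incoming flux `∫ u(y,q) ρ(y,x) dy` vanishes for almost every
`x ∈ A`. Integrating over `A` and using that `ρ(y, ·)` charges `A` for every `y ∈ A`, the mass
in `A` at an interior time `q` of the window is zero, contradicting that it is `1`.
-/

open MeasureTheory Set Filter Topology

noncomputable section

/-- Points of `ℝ^d`. -/
abbrev Vec (d : ℕ) := EuclideanSpace ℝ (Fin d)

/-- Assumption A on the fitness function `F`, the branching density `ρ`,
the initial density `u₀` and the initial boundary value `lam₀`. -/
structure AssumptionA (d : ℕ) (F : Vec d → ℝ) (ρ : Vec d → Vec d → ℝ)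
    (u₀ : Vec d → ℝ) (lam₀ : ℝ) : Prop where
  F_cont : Continuous F
  F_unbdd_below : ∀ c : ℝ, ∃ x, F x < c
  F_unbdd_above : ∀ c : ℝ, ∃ x, c < F x
  F_level_null : ∀ a : ℝ, volume (F ⁻¹' {a}) = 0
  ρ_meas : Measurable (Function.uncurry ρ)
  ρ_nonneg : ∀ x y, 0 ≤ ρ x y
  ρ_int : ∀ x, Integrable (ρ x)
  ρ_prob : ∀ x, ∫ y, ρ x y = 1
  ρ_dom : ∃ (ρt : Vec d → ℝ) (c : ℝ), (∀ z, 0 ≤ ρt z) ∧ Integrable ρt ∧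
    (∫ z, ρt z = 1) ∧ ∀ x y, ρ x y ≤ c * ρt (y - x)
  ρ_unif_cont : ∀ ε : ℝ, 0 < ε → ∃ δ : ℝ, 0 < δ ∧
    ∀ x y₁ y₂ : Vec d, dist y₁ y₂ < δ → |ρ x y₁ - ρ x y₂| < ε
  ρ_push_pos : ∀ a : ℝ, ∀ x : Vec d, a < F x → 0 < ∫ y in F ⁻¹' Ioi a, ρ x y
  u₀_nonneg : ∀ x, 0 ≤ u₀ x
  u₀_bdd : ∃ C : ℝ, ∀ x, u₀ x ≤ C
  u₀_int : Integrable u₀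
  u₀_prob : ∫ x, u₀ x = 1
  u₀_cont : ContinuousOn u₀ (F ⁻¹' Ioi lam₀)
  u₀_vanish : ∀ x, F x < lam₀ → u₀ x = 0
  u₀_charge : ∀ δ : ℝ, 0 < δ → ∀ l : ℝ, lam₀ ≤ l → 0 < ∫ x in F ⁻¹' Ioo l (l + δ), u₀ x

/-- `(u, ℓ)` is an admissible pair solving the free boundary problem (FBP):
`ℓ` is càdlàg, `u` is nonnegative, locally bounded in time, continuous in `x`
and continuously differentiable in `t` on `{(x,t) : F x > ℓ t}`, and
(i) `∂ₜ u(x,t) = ∫ u(y,t) ρ(y,x) dy` for `F x > ℓ t`, `t > 0`;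
(ii) `u(x,t) = 0` for `F x ≤ ℓ t`, `t > 0`;
(iii) `∫ u(x,t) dx = 1` for `t > 0`;
(iv) `u(·,0) = u₀`, `ℓ 0 = lam₀`. -/
structure IsFBPSolution (d : ℕ) (F : Vec d → ℝ) (ρ : Vec d → Vec d → ℝ)
    (u₀ : Vec d → ℝ) (lam₀ : ℝ) (u : Vec d → ℝ → ℝ) (ℓ : ℝ → ℝ) : Prop where
  ℓ_rc : ∀ t : ℝ, 0 ≤ t → ContinuousWithinAt ℓ (Ici t) t
  ℓ_ll : ∀ t : ℝ, 0 < t → ∃ L : ℝ, Tendsto ℓ (𝓝[<] t) (𝓝 L)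
  u_nonneg : ∀ x, ∀ t : ℝ, 0 ≤ t → 0 ≤ u x t
  u_bdd : ∀ T : ℝ, 0 < T → ∃ C : ℝ, ∀ x, ∀ t ∈ Icc (0:ℝ) T, u x t ≤ C
  u_meas : ∀ t : ℝ, 0 ≤ t → Measurable fun x => u x t
  u_cont_x : ∀ t : ℝ, 0 ≤ t → ContinuousOn (fun x => u x t) (F ⁻¹' Ioi (ℓ t))
  pde : ∀ x, ∀ t : ℝ, 0 < t → ℓ t < F x →
    HasDerivAt (fun s => u x s) (∫ y, u y t * ρ y x) t
  pde_cont : ∀ x, ContinuousOn (fun t => ∫ y, u y t * ρ y x) {t : ℝ | 0 < t ∧ ℓ t < F x}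
  vanish : ∀ x, ∀ t : ℝ, 0 < t → F x ≤ ℓ t → u x t = 0
  mass : ∀ t : ℝ, 0 < t → ∫ x, u x t = 1
  init_u : ∀ x, u x 0 = u₀ x
  init_ℓ : ℓ 0 = lam₀

lemma exists_downcrossing {f : ℝ → ℝ} {s t c : ℝ} (hst : s ≤ t)
    (hf : ∀ q ∈ Icc s t, ContinuousWithinAt f (Ici q) q) (hs : c < f s) (ht : f t < c) :
    ∃ α b, s < α ∧ α < b ∧ α ∈ closure {q | c ≤ f q} ∧ ∀ q ∈ Icc α b, f q ≤ c := by
  set S := {q ∈ Icc s t | c ≤ f q}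
  have hsS : s ∈ S := ⟨left_mem_Icc.2 hst, hs.le⟩
  have hSbdd : BddAbove S := ⟨t, fun q hq => hq.1.2⟩
  set α := sSup S
  have hαs : s ≤ α := le_csSup hSbdd hsS
  have hαt : α ≤ t := csSup_le ⟨s, hsS⟩ fun q hq => hq.1.2
  have hafter : ∀ q ∈ Ioc α t, f q < c := fun q hq => not_le.1 fun hcq =>
    (le_csSup hSbdd ⟨⟨hαs.trans hq.1.le, hq.2⟩, hcq⟩).not_gt hq.1
  obtain ⟨b, hαb, hb⟩ : ∃ b, α < b ∧ ∀ q ∈ Icc α b, f q ≤ c := by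
    rcases hαt.lt_or_eq with hαt | hαt
    · have hfα : f α ≤ c :=
        le_of_tendsto ((hf α ⟨hαs, hαt.le⟩).mono_left (nhdsWithin_mono _ Ioi_subset_Ici_self))
          (eventually_of_mem (Ioc_mem_nhdsGT hαt) fun q hq => (hafter q hq).le)
      refine ⟨t, hαt, fun q hq => ?_⟩
      rcases hq.1.eq_or_lt with rfl | hq'
      exacts [hfα, (hafter q ⟨hq', hq.2⟩).le]
    · have hnear : f ⁻¹' Iic c ∈ 𝓝[≥] α :=
        hf α ⟨hαs, hαt.le⟩ (Iic_mem_nhds (hαt ▸ ht))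
      exact mem_nhdsGE_iff_exists_Icc_subset.1 hnear
  refine ⟨α, b, hαs.lt_of_ne fun hsα => ?_, hαb,
    closure_mono (fun q hq => hq.2) (csSup_mem_closure ⟨s, hsS⟩ hSbdd), hb⟩
  exact (hb s ⟨hsα.ge, hsα.le.trans hαb.le⟩).not_gt hs

lemma HasDerivAt.eq_zero_of_monotoneOn_Icc {f : ℝ → ℝ} {f' a b q : ℝ} (hd : HasDerivAt f f' q)
    (hf : MonotoneOn f (Icc a b)) (hab : f a = f b) (hq : q ∈ Ioo a b) : f' = 0 := by
  have hconst : ∀ r ∈ Icc a b, f r = f a := fun r hr =>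
    le_antisymm (hab ▸ hf hr ⟨hr.1.trans hr.2, le_rfl⟩ hr.2) (hf ⟨le_rfl, hr.1.trans hr.2⟩ hr hr.1)
  have hloc : f =ᶠ[𝓝 q] fun _ => f a := eventually_of_mem (Icc_mem_nhds hq.1 hq.2) hconst
  exact hd.unique (hloc.hasDerivAt_iff.2 (hasDerivAt_const q (f a)))

section Measure

variable {X : Type*} [MeasurableSpace X] {μ : Measure X}

lemma ae_restrict_eq_of_forall_le_of_integral_le {f g : X → ℝ} {A : Set X} (hA : MeasurableSet A)
    (hf : Integrable f μ) (hg : Integrable g μ) (hg0 : 0 ≤ g) (hfg : ∀ x ∈ A, f x ≤ g x)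
    (h : ∫ x, g x ∂μ ≤ ∫ x in A, f x ∂μ) : f =ᵐ[μ.restrict A] g := by
  have hle : f ≤ᵐ[μ.restrict A] g := (ae_restrict_iff' hA).2 (ae_of_all _ hfg)
  refine (integral_eq_iff_of_ae_le hf.integrableOn hg.integrableOn hle).1
    (le_antisymm (integral_mono_ae hf.integrableOn hg.integrableOn hle) ?_)
  calc ∫ x in A, g x ∂μ ≤ ∫ x, g x ∂μ := setIntegral_le_integral hg (ae_of_all _ hg0)
    _ ≤ ∫ x in A, f x ∂μ := h

/-- By Tonelli, `∫_A ∫ g(y) k(y,x) dy dx = ∫ g(y) (∫_A k(y,x) dx) dy`, and the inner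
factor is positive on `A`. -/
lemma ae_eq_zero_of_ae_integral_mul_eq_zero [SFinite μ] {g : X → ℝ} {k : X → X → ℝ} {A : Set X}
    (hg : Measurable g) (hg0 : 0 ≤ g) (hk : Measurable (Function.uncurry k))
    (hk0 : ∀ y x, 0 ≤ k y x) (hint : ∀ x, Integrable (fun y => g y * k y x) μ)
    (hzero : ∀ᵐ x ∂μ.restrict A, ∫ y, g y * k y x ∂μ = 0)
    (hpos : ∀ y ∈ A, 0 < ∫ x in A, k y x ∂μ) : ∀ᵐ y ∂μ, y ∈ A → g y = 0 := by
  have hinner : ∀ᵐ x ∂μ.restrict A, ∫⁻ y, ENNReal.ofReal (g y * k y x) ∂μ = 0 := by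
    filter_upwards [hzero] with x hx
    rw [← ofReal_integral_eq_lintegral_ofReal (hint x)
      (ae_of_all _ fun y => mul_nonneg (hg0 y) (hk0 y x)), hx, ENNReal.ofReal_zero]
  have htotal : ∫⁻ y, ENNReal.ofReal (g y) * ∫⁻ x in A, ENNReal.ofReal (k y x) ∂μ ∂μ = 0 := by
    calc _ = ∫⁻ y, ∫⁻ x in A, ENNReal.ofReal (g y * k y x) ∂μ ∂μ := by
          refine lintegral_congr fun y => ?_
          rw [← lintegral_const_mul _ hk.of_uncurry_left.ennreal_ofReal]
          simp_rw [ENNReal.ofReal_mul (hg0 y)]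
      _ = ∫⁻ x in A, ∫⁻ y, ENNReal.ofReal (g y * k y x) ∂μ ∂μ :=
          (lintegral_lintegral_swap ((hg.comp measurable_snd).mul
            (hk.comp measurable_swap)).ennreal_ofReal.aemeasurable).symm
      _ = 0 := (lintegral_congr_ae hinner).trans lintegral_zero
  have hmass : ∀ y ∈ A, ∫⁻ x in A, ENNReal.ofReal (k y x) ∂μ ≠ 0 := fun y hy h => by
    have := hpos y hy
    rw [integral_eq_lintegral_of_nonneg_ae (ae_of_all _ (hk0 y))
      hk.of_uncurry_left.aestronglyMeasurable, h] at this
    simp at this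
  have hmeas : Measurable fun y => ∫⁻ x in A, ENNReal.ofReal (k y x) ∂μ :=
    hk.ennreal_ofReal.lintegral_prod_right'
  filter_upwards [(lintegral_eq_zero_iff (hg.ennreal_ofReal.mul hmeas)).1 htotal] with y hy hyA
  have hgy : ENNReal.ofReal (g y) = 0 := (mul_eq_zero.1 hy).resolve_right (hmass y hyA)
  exact le_antisymm (ENNReal.ofReal_eq_zero.1 hgy) (hg0 y)

end Measure

section FBP

variable {d : ℕ} {F : Vec d → ℝ} {ρ : Vec d → Vec d → ℝ} {u₀ : Vec d → ℝ} {lam₀ : ℝ}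
  {u : Vec d → ℝ → ℝ} {ℓ : ℝ → ℝ}

lemma AssumptionA.integrable_rho_left (hA : AssumptionA d F ρ u₀ lam₀) (x : Vec d) :
    Integrable (fun y => ρ y x) := by
  obtain ⟨ρt, c, -, hρt, -, hdom⟩ := hA.ρ_dom
  refine ((hρt.comp_sub_left x).const_mul c).mono' hA.ρ_meas.of_uncurry_right.aestronglyMeasurable
    (ae_of_all _ fun y => ?_)
  rw [Real.norm_of_nonneg (hA.ρ_nonneg y x)]
  exact hdom y x

namespace IsFBPSolution

lemma integrable (hsol : IsFBPSolution d F ρ u₀ lam₀ u ℓ) {t : ℝ} (ht : 0 < t) :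
    Integrable (fun x => u x t) :=
  .of_integral_ne_zero (by rw [hsol.mass t ht]; exact one_ne_zero)

lemma integrable_flux (hA : AssumptionA d F ρ u₀ lam₀) (hsol : IsFBPSolution d F ρ u₀ lam₀ u ℓ)
    {t : ℝ} (ht : 0 < t) (x : Vec d) : Integrable (fun y => u y t * ρ y x) := by
  obtain ⟨C, hC⟩ := hsol.u_bdd t ht
  refine (hA.integrable_rho_left x).bdd_mul (c := C) (hsol.u_meas t ht.le).aestronglyMeasurable
    (ae_of_all _ fun y => ?_)
  rw [Real.norm_of_nonneg (hsol.u_nonneg y t ht.le)]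
  exact hC y t ⟨ht.le, le_rfl⟩

lemma monotoneOn_of_boundary_lt (hA : AssumptionA d F ρ u₀ lam₀)
    (hsol : IsFBPSolution d F ρ u₀ lam₀ u ℓ) {x : Vec d} {a b : ℝ} (ha : 0 < a)
    (hx : ∀ q ∈ Icc a b, ℓ q < F x) : MonotoneOn (u x) (Icc a b) := by
  have hd : ∀ q ∈ Icc a b, HasDerivAt (u x) (∫ y, u y q * ρ y x) q := fun q hq =>
    hsol.pde x q (ha.trans_le hq.1) (hx q hq)
  refine monotoneOn_of_hasDerivWithinAt_nonneg (f' := fun q => ∫ y, u y q * ρ y x)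
    (convex_Icc a b)
    (fun q hq => (hd q hq).continuousAt.continuousWithinAt) (fun q hq => ?_) (fun q hq => ?_)
  all_goals rw [interior_Icc] at hq
  · exact (hd q (Ioo_subset_Icc_self hq)).hasDerivWithinAt
  · exact integral_nonneg fun y =>
      mul_nonneg (hsol.u_nonneg y q (ha.trans hq.1).le) (hA.ρ_nonneg y x)

lemma eq_zero_of_mem_closure (hsol : IsFBPSolution d F ρ u₀ lam₀ u ℓ) {x : Vec d} {a : ℝ}
    (ha : 0 < a) (h : a ∈ closure {q | F x ≤ ℓ q}) : u x a = 0 := by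
  by_cases hxa : F x ≤ ℓ a
  · exact hsol.vanish x a ha hxa
  have hcont : ContinuousAt (u x) a := (hsol.pde x a ha (not_le.1 hxa)).continuousAt
  have hmem : a ∈ closure ({q | F x ≤ ℓ q} ∩ Ioi 0) := by
    rw [inter_comm]
    exact isOpen_Ioi.inter_closure ⟨ha, h⟩
  have hmaps : MapsTo (u x) ({q | F x ≤ ℓ q} ∩ Ioi 0) {0} := fun q hq =>
    hsol.vanish x q hq.2 hq.1
  simpa using hcont.continuousWithinAt.mem_closure hmem hmaps

lemma exists_ne_zero_of_boundary_le (hA : AssumptionA d F ρ u₀ lam₀)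
    (hsol : IsFBPSolution d F ρ u₀ lam₀ u ℓ) {a b c : ℝ} (ha : 0 < a) (hab : a < b)
    (hℓ : ∀ q ∈ Icc a b, ℓ q ≤ c) : ∃ x, F x ≤ c ∧ u x a ≠ 0 := by
  by_contra! h0
  set A := F ⁻¹' Ioi c
  have hAm : MeasurableSet A := (isOpen_Ioi.preimage hA.F_cont).measurableSet
  obtain ⟨q, hq⟩ := nonempty_Ioo.2 hab
  have hmono : ∀ x ∈ A, MonotoneOn (u x) (Icc a b) := fun x hx =>
    hsol.monotoneOn_of_boundary_lt hA ha fun r hr => (hℓ r hr).trans_lt hx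
  have hmassA : ∫ x in A, u x a = 1 :=
    (setIntegral_eq_integral_of_forall_compl_eq_zero fun x hx => h0 x (not_lt.1 hx)).trans
      (hsol.mass a ha)
  have hconst : (fun x => u x a) =ᵐ[volume.restrict A] fun x => u x b :=
    ae_restrict_eq_of_forall_le_of_integral_le hAm (hsol.integrable ha)
      (hsol.integrable (ha.trans hab)) (fun x => hsol.u_nonneg x b (ha.trans hab).le)
      (fun x hx => hmono x hx ⟨le_rfl, hab.le⟩ ⟨hab.le, le_rfl⟩ hab.le)
      (by rw [hsol.mass b (ha.trans hab), hmassA])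
  have hflux : ∀ᵐ x ∂volume.restrict A, ∫ y, u y q * ρ y x = 0 := by
    filter_upwards [hconst, ae_restrict_mem hAm] with x hx hxA
    exact (hsol.pde x q (ha.trans hq.1) ((hℓ q (Ioo_subset_Icc_self hq)).trans_lt hxA))
      |>.eq_zero_of_monotoneOn_Icc (hmono x hxA) hx hq
  have hq0 : ∀ᵐ y, y ∈ A → u y q = 0 :=
    ae_eq_zero_of_ae_integral_mul_eq_zero (hsol.u_meas q (ha.trans hq.1).le)
      (fun y => hsol.u_nonneg y q (ha.trans hq.1).le) hA.ρ_meas hA.ρ_nonneg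
      (hsol.integrable_flux hA (ha.trans hq.1)) hflux fun y hy => hA.ρ_push_pos c y hy
  have hgrow : ∫ x in A, u x a ≤ ∫ x in A, u x q :=
    setIntegral_mono_on (hsol.integrable ha).integrableOn
      (hsol.integrable (ha.trans hq.1)).integrableOn hAm
      fun x hx => hmono x hx ⟨le_rfl, hab.le⟩ (Ioo_subset_Icc_self hq) hq.1.le
  rw [hmassA, setIntegral_eq_zero_of_ae_eq_zero hq0] at hgrow
  norm_num at hgrow

end IsFBPSolution

end FBP

/-- Under Assumption A, the boundary component of any FBP solution is
nondecreasing on `[0, ∞)`. -/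
theorem fbp_boundary_monotone {d : ℕ} (F : Vec d → ℝ) (ρ : Vec d → Vec d → ℝ)
    (u₀ : Vec d → ℝ) (lam₀ : ℝ) (hA : AssumptionA d F ρ u₀ lam₀)
    (u : Vec d → ℝ → ℝ) (ℓ : ℝ → ℝ) (hsol : IsFBPSolution d F ρ u₀ lam₀ u ℓ) :
    ∀ s t : ℝ, 0 ≤ s → s ≤ t → ℓ s ≤ ℓ t := by
  intro s t hs hst
  by_contra! hlt
  obtain ⟨c, hct, hcs⟩ := exists_between hlt
  obtain ⟨α, b, hsα, hαb, hcross, hbelow⟩ :=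
    exists_downcrossing hst (fun q hq => hsol.ℓ_rc q (hs.trans hq.1)) hcs hct
  have hα : 0 < α := hs.trans_lt hsα
  obtain ⟨x, hxc, hx⟩ := hsol.exists_ne_zero_of_boundary_le hA hα hαb hbelow
  exact hx (hsol.eq_zero_of_mem_closure hα (closure_mono (fun q hq => hxc.trans hq) hcross))
end
end

section
/- Under Assumption A, let (u,ℓ) be a solution of the free boundary problem (FBP), let s > 0, and let λ = ℓ_{s−} denote the left limit of ℓ at s. If ℓ_θ ≤ λ for all θ ∈ [0,s), then ∫_{F⁻¹((λ,∞))} u(x,s) dx = 1. -/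
open MeasureTheory Set Filter Topology

noncomputable section

/-!
Just before time `s` the boundary `ℓ` is close to its left limit `lam`, so `u(x, ·)` vanishes on a
left neighbourhood of `s` at every `x` with `F x < lam`. At such `x`, either `F x ≤ ℓ s` and
`u(x, s) = 0` by the boundary condition, or `F x > ℓ s` and `u(x, ·)` is differentiable, hence
continuous, at `s`, so again `u(x, s) = 0`. The level set `{F = lam}` is null, so all the unit
mass of `u(·, s)` lies in `{F > lam}`.
-/

namespace IsFBPSolution

variable {d : ℕ} {F : Vec d → ℝ} {ρ : Vec d → Vec d → ℝ} {u₀ : Vec d → ℝ} {lam₀ : ℝ}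
  {u : Vec d → ℝ → ℝ} {ℓ : ℝ → ℝ}

theorem eventuallyEq_zero_nhdsLT (hsol : IsFBPSolution d F ρ u₀ lam₀ u ℓ) {s lam : ℝ}
    (hs : 0 < s) (hlim : Tendsto ℓ (𝓝[<] s) (𝓝 lam)) {x : Vec d} (hx : F x < lam) :
    u x =ᶠ[𝓝[<] s] fun _ => 0 := by
  filter_upwards [hlim (Ioi_mem_nhds hx), Ioo_mem_nhdsLT hs] with θ hθ hθs
  exact hsol.vanish x θ hθs.1 (le_of_lt hθ)

theorem eq_zero_of_lt_leftLim (hsol : IsFBPSolution d F ρ u₀ lam₀ u ℓ) {s lam : ℝ}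
    (hs : 0 < s) (hlim : Tendsto ℓ (𝓝[<] s) (𝓝 lam)) {x : Vec d} (hx : F x < lam) :
    u x s = 0 := by
  rcases le_or_gt (F x) (ℓ s) with hle | hgt
  · exact hsol.vanish x s hs hle
  · have hcont : Tendsto (u x) (𝓝[<] s) (𝓝 (u x s)) :=
      (hsol.pde x s hs hgt).continuousAt.tendsto.mono_left nhdsWithin_le_nhds
    exact tendsto_nhds_unique hcont
      (tendsto_const_nhds.congr' (hsol.eventuallyEq_zero_nhdsLT hs hlim hx).symm)

end IsFBPSolution

theorem fbp_full_mass_above_left_limit_general {d : ℕ} (F : Vec d → ℝ) (ρ : Vec d → Vec d → ℝ)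
    (u₀ : Vec d → ℝ) (lam₀ : ℝ) (hA : AssumptionA d F ρ u₀ lam₀)
    (u : Vec d → ℝ → ℝ) (ℓ : ℝ → ℝ) (hsol : IsFBPSolution d F ρ u₀ lam₀ u ℓ)
    (s : ℝ) (hs : 0 < s) (lam : ℝ) (hlim : Tendsto ℓ (𝓝[<] s) (𝓝 lam)) :
    ∫ x in F ⁻¹' Ioi lam, u x s = 1 := by
  rw [setIntegral_eq_integral_of_ae_compl_eq_zero, hsol.mass s hs]
  filter_upwards [measure_eq_zero_iff_ae_notMem.mp (hA.F_level_null lam)] with x hx hxc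
  exact hsol.eq_zero_of_lt_leftLim hs hlim (lt_of_le_of_ne (not_lt.mp hxc) hx)

/-- If the boundary stays below its left limit `lam = ℓ_{s-}` on `[0,s)`, then the
density at time `s` has full mass above level `lam`. -/
theorem fbp_full_mass_above_left_limit {d : ℕ} (F : Vec d → ℝ) (ρ : Vec d → Vec d → ℝ)
    (u₀ : Vec d → ℝ) (lam₀ : ℝ) (hA : AssumptionA d F ρ u₀ lam₀)
    (u : Vec d → ℝ → ℝ) (ℓ : ℝ → ℝ) (hsol : IsFBPSolution d F ρ u₀ lam₀ u ℓ)
    (s : ℝ) (hs : 0 < s) (lam : ℝ) (hlim : Tendsto ℓ (𝓝[<] s) (𝓝 lam))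
    (hbelow : ∀ θ ∈ Ico (0:ℝ) s, ℓ θ ≤ lam) :
    ∫ x in F ⁻¹' Ioi lam, u x s = 1 :=
  fbp_full_mass_above_left_limit_general F ρ u₀ lam₀ hA u ℓ hsol s hs lam hlim
end
end

section
/- Let T > 0, J ∈ ℕ, δ = T/J, and t_j = jδ for j = 0,…,J−1. Let k, m : [0,T) → ℝ be nondecreasing right-continuous functions that are constant on each interval [t_j, t_{j+1}), with values a_j(k) = k(t_j) and a_j(m) = m(t_j). Let F : ℝ^d → ℝ be continuous with Lebesgue-null level sets, let ρ : ℝ^d × ℝ^d → [0,∞) be measurable with ρ(x,·) a probability density for each x, and let z : ℝ^d → [0,∞) be integrable. Suppose w, v : ℝ^d × [0,T) → [0,∞) are measurable functions satisfying: w(x,t) ≤ z(x) and v(x,t) ≤ z(x) for all (x,t); w(x,t) = 0 whenever F(x) ≤ k_t and v(x,t) = 0 whenever F(x) ≤ m_t; w(x,t) = w(x,0) + ∫₀ᵗ ∫_{ℝ^d} w(y,s) ρ(y,x) dy ds whenever F(x) > k_t, and v(x,t) = v(x,0) + ∫₀ᵗ ∫_{ℝ^d} v(y,s) ρ(y,x)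 dy ds whenever F(x) > m_t. Let η = max_{0 ≤ j ≤ J−1} ∫_{F⁻¹((a_j(k) ∧ a_j(m), a_j(k) ∨ a_j(m)))} z(x) dx, and suppose ∫_{ℝ^d} |w(x,0) − v(x,0)| dx ≤ η. Then sup_{t ∈ [0,T)} ∫_{ℝ^d} |w(x,t) − v(x,t)| dx ≤ 2 η e^{T}. -/
/-!
Let `Λ t = ∫ |w(·,t) - v(·,t)|`. At a time `t` both solutions vanish where `F ≤ min k_t m_t`;
on the strip `min k_t m_t < F < max k_t m_t` their difference is at most `z`, which contributes
at most `η` (the level set `F = max k_t m_t` is null); where `F > max k_t m_t` both Duhamel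
equations hold, so the difference at `x` is at most its initial value plus
`∫₀ᵗ ∫ |w - v|(y,s) ρ(y,x) dy ds`, and since each `ρ(y,·)` has mass one, Tonelli turns the
`x`-integral of this term into `∫₀ᵗ Λ`. Thus `Λ t ≤ 2η + ∫₀ᵗ Λ`, and Grönwall's inequality gives
`Λ t ≤ 2η eᵗ`.

The estimate is carried out in `ℝ≥0∞`, so that only the Bochner integrals of the equations need
integrability: `y ↦ w(y,s) ρ(y,x)` is dominated by `z(y) ρ(y,x)`, integrable for almost every `x`.
-/

open MeasureTheory Set Filter Topology
open scoped ENNReal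

theorem lintegral_Ioc_ofReal_deriv_eq_sub {f f' : ℝ → ℝ} {a b : ℝ} (hab : a ≤ b)
    (hf : ∀ x, HasDerivAt f (f' x) x) (hf' : Continuous f')
    (hf'_nonneg : ∀ x ∈ Ioc a b, 0 ≤ f' x) :
    ∫⁻ x in Ioc a b, ENNReal.ofReal (f' x) = ENNReal.ofReal (f b - f a) := by
  rw [← ofReal_integral_eq_lintegral_ofReal hf'.integrableOn_Ioc
      ((ae_restrict_iff' measurableSet_Ioc).2 (ae_of_all _ hf'_nonneg)),
    ← intervalIntegral.integral_of_le hab,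
    intervalIntegral.integral_eq_sub_of_hasDerivAt (fun x _ => hf x) (hf'.intervalIntegrable a b)]

theorem hasDerivAt_pow_succ_div_factorial (n : ℕ) (x : ℝ) :
    HasDerivAt (fun x : ℝ => x ^ (n + 1) / (n + 1).factorial) (x ^ n / n.factorial) x := by
  refine ((hasDerivAt_pow (n + 1) x).div_const _).congr_deriv ?_
  rw [Nat.factorial_succ]
  push_cast
  field_simp

theorem add_lintegral_Ioc_exp_add_pow_div_factorial (A C : ℝ≥0∞) (n : ℕ) {t : ℝ} (ht : 0 ≤ t) :
    A + ∫⁻ s in Ioc 0 t,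
        (A * ENNReal.ofReal (Real.exp s) + C * ENNReal.ofReal (s ^ n / n.factorial)) =
      A * ENNReal.ofReal (Real.exp t) + C * ENNReal.ofReal (t ^ (n + 1) / (n + 1).factorial) := by
  rw [lintegral_add_left (by fun_prop), lintegral_const_mul _ (by fun_prop),
    lintegral_const_mul _ (by fun_prop),
    lintegral_Ioc_ofReal_deriv_eq_sub ht Real.hasDerivAt_exp Real.continuous_exp
      fun s _ => (Real.exp_pos s).le,
    lintegral_Ioc_ofReal_deriv_eq_sub ht (hasDerivAt_pow_succ_div_factorial n) (by fun_prop)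
      fun s hs => by have := hs.1.le; positivity,
    ← add_assoc, Real.exp_zero, ← mul_one_add, ← ENNReal.ofReal_one,
    ← ENNReal.ofReal_add zero_le_one (by linarith [Real.one_le_exp ht])]
  simp

theorem lintegral_gronwall {Λ : ℝ → ℝ≥0∞} {A C : ℝ≥0∞} {T : ℝ} (hC : C ≠ ∞)
    (hΛC : ∀ t ∈ Ico 0 T, Λ t ≤ C)
    (hΛ : ∀ t ∈ Ico 0 T, Λ t ≤ A + ∫⁻ s in Ioc 0 t, Λ s) :
    ∀ t ∈ Ico 0 T, Λ t ≤ A * ENNReal.ofReal (Real.exp t) := by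
  -- `n`-fold iteration of the inequality, starting from `Λ ≤ C`
  have hpicard : ∀ n : ℕ, ∀ t ∈ Ico 0 T,
      Λ t ≤ A * ENNReal.ofReal (Real.exp t) + C * ENNReal.ofReal (t ^ n / n.factorial) := by
    intro n
    induction n with
    | zero => exact fun t ht => by simpa using (hΛC t ht).trans le_add_self
    | succ n ih =>
      intro t ht
      have hIoc : Ioc 0 t ⊆ Ico 0 T := fun s hs => ⟨hs.1.le, hs.2.trans_lt ht.2⟩
      calc Λ t ≤ A + ∫⁻ s in Ioc 0 t, Λ s := hΛ t ht
        _ ≤ A + ∫⁻ s in Ioc 0 t,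
              (A * ENNReal.ofReal (Real.exp s) + C * ENNReal.ofReal (s ^ n / n.factorial)) := by
          gcongr A + ?_
          exact setLIntegral_mono (by fun_prop) fun s hs => ih s (hIoc hs)
        _ = _ := add_lintegral_Ioc_exp_add_pow_div_factorial A C n ht.1
  intro t ht
  have hlim : Tendsto (fun n : ℕ => A * ENNReal.ofReal (Real.exp t) +
      C * ENNReal.ofReal (t ^ n / n.factorial)) atTop (𝓝 (A * ENNReal.ofReal (Real.exp t))) := by
    simpa using tendsto_const_nhds.add (ENNReal.Tendsto.const_mul
      (ENNReal.tendsto_ofReal (FloorSemiring.tendsto_pow_div_factorial_atTop t)) (Or.inr hC))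
  exact ge_of_tendsto' hlim fun n => hpicard n t ht

theorem exists_lt_mem_Ico_nat_mul {δ t : ℝ} {J : ℕ} (hδ : 0 < δ) (ht : t ∈ Ico 0 (J * δ)) :
    ∃ j < J, t ∈ Ico ((j : ℝ) * δ) ((j + 1) * δ) := by
  have ht0 : 0 ≤ t / δ := div_nonneg ht.1 hδ.le
  refine ⟨⌊t / δ⌋₊, ?_, ?_, ?_⟩
  · exact (Nat.floor_lt ht0).2 ((div_lt_iff₀ hδ).2 ht.2)
  · exact (le_div_iff₀ hδ).1 (Nat.floor_le ht0)
  · exact (div_lt_iff₀ hδ).1 (Nat.lt_floor_add_one _)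

theorem enorm_sub_le_of_eq_add_integral {a b a₀ b₀ t : ℝ} {f g : ℝ → ℝ} (ht : 0 ≤ t)
    (hf : IntervalIntegrable f volume 0 t) (hg : IntervalIntegrable g volume 0 t)
    (ha : a = a₀ + ∫ s in 0..t, f s) (hb : b = b₀ + ∫ s in 0..t, g s) :
    ‖a - b‖ₑ ≤ ‖a₀ - b₀‖ₑ + ∫⁻ s in Ioc 0 t, ‖f s - g s‖ₑ := by
  have hab : a - b = (a₀ - b₀) + ∫ s in Ioc 0 t, (f s - g s) := by
    rw [ha, hb, ← intervalIntegral.integral_of_le ht, intervalIntegral.integral_sub hf hg]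
    ring
  rw [hab]
  exact (enorm_add_le _ _).trans (add_le_add_right (enorm_integral_le_lintegral_enorm _) _)

section Kernel

variable {X : Type*} [MeasurableSpace X] {μ : Measure X} [SFinite μ] {ρ : X → X → ℝ}

theorem lintegral_lintegral_mul_enorm_le (hρ : Measurable (Function.uncurry ρ))
    (hρ_le : ∀ y, ∫⁻ x, ‖ρ y x‖ₑ ∂μ ≤ 1) {f : X → ℝ≥0∞} (hf : AEMeasurable f μ) :
    ∫⁻ x, ∫⁻ y, f y * ‖ρ y x‖ₑ ∂μ ∂μ ≤ ∫⁻ y, f y ∂μ := by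
  rw [lintegral_lintegral_swap (hf.comp_snd.mul (hρ.comp measurable_swap).enorm.aemeasurable)]
  refine lintegral_mono fun y => ?_
  rw [lintegral_const_mul _ hρ.of_uncurry_left.enorm]
  exact mul_le_of_le_one_right' (hρ_le y)

theorem ae_integrable_mul_kernel (hρ : Measurable (Function.uncurry ρ))
    (hρ_le : ∀ y, ∫⁻ x, ‖ρ y x‖ₑ ∂μ ≤ 1) {z : X → ℝ} (hz : Integrable z μ) :
    ∀ᵐ x ∂μ, Integrable (fun y => z y * ρ y x) μ := by
  have hmeas : AEMeasurable (fun x => ∫⁻ y, ‖z y‖ₑ * ‖ρ y x‖ₑ ∂μ) μ :=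
    AEMeasurable.lintegral_prod_right'
      (hz.aemeasurable.enorm.comp_snd.mul (hρ.comp measurable_swap).enorm.aemeasurable)
  filter_upwards [ae_lt_top' hmeas
    ((lintegral_lintegral_mul_enorm_le hρ hρ_le hz.aemeasurable.enorm).trans_lt hz.2).ne] with x hx
  exact ⟨hz.1.mul hρ.of_uncurry_right.aestronglyMeasurable, by
    simpa only [HasFiniteIntegral, enorm_mul] using hx⟩

end Kernel

structure IsFreeBoundarySolution {X : Type*} [MeasurableSpace X] (μ : Measure X) (F : X → ℝ)
    (ρ : X → X → ℝ) (z : X → ℝ) (T : ℝ) (k : ℝ → ℝ) (w : X → ℝ → ℝ) : Prop where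
  measurable : Measurable (Function.uncurry w)
  nonneg : ∀ x, ∀ t ∈ Ico 0 T, 0 ≤ w x t
  le : ∀ x, ∀ t ∈ Ico 0 T, w x t ≤ z x
  eq_zero : ∀ x, ∀ t ∈ Ico 0 T, F x ≤ k t → w x t = 0
  eq_add_integral : ∀ x, ∀ t ∈ Ico 0 T, k t < F x →
    w x t = w x 0 + ∫ s in 0..t, ∫ y, w y s * ρ y x ∂μ

namespace IsFreeBoundarySolution

variable {X : Type*} [MeasurableSpace X] {μ : Measure X} {F : X → ℝ} {ρ : X → X → ℝ}
  {z : X → ℝ} {T t : ℝ} {k m : ℝ → ℝ} {w v : X → ℝ → ℝ} {x : X}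

theorem norm_mul_le (hw : IsFreeBoundarySolution μ F ρ z T k w) (ht : t ∈ Ico 0 T) (c : ℝ) :
    ‖w x t * c‖ ≤ ‖z x * c‖ := by
  simp only [norm_mul, Real.norm_eq_abs]
  exact mul_le_mul_of_nonneg_right (abs_le_abs_of_nonneg (hw.nonneg x t ht) (hw.le x t ht))
    (abs_nonneg c)

theorem integrable_mul_kernel (hw : IsFreeBoundarySolution μ F ρ z T k w)
    (hρ : Measurable (Function.uncurry ρ)) (hx : Integrable (fun y => z y * ρ y x) μ)
    (ht : t ∈ Ico 0 T) : Integrable (fun y => w y t * ρ y x) μ :=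
  hx.mono (hw.measurable.of_uncurry_right.mul hρ.of_uncurry_right).aestronglyMeasurable
    (ae_of_all _ fun _ => hw.norm_mul_le ht _)

theorem intervalIntegrable_integral_mul_kernel [SFinite μ]
    (hw : IsFreeBoundarySolution μ F ρ z T k w) (hρ : Measurable (Function.uncurry ρ))
    (hx : Integrable (fun y => z y * ρ y x) μ) (ht : t ∈ Ico 0 T) :
    IntervalIntegrable (fun s => ∫ y, w y s * ρ y x ∂μ) volume 0 t := by
  rw [intervalIntegrable_iff_integrableOn_Ioc_of_le ht.1]
  have hmeas : StronglyMeasurable fun s => ∫ y, w y s * ρ y x ∂μ :=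
    StronglyMeasurable.integral_prod_right' (f := fun p : ℝ × X => w p.2 p.1 * ρ p.2 x)
      ((hw.measurable.comp measurable_swap).mul
        (hρ.of_uncurry_right.comp measurable_snd)).stronglyMeasurable
  refine Measure.integrableOn_of_bounded (M := ∫ y, ‖z y * ρ y x‖ ∂μ) measure_Ioc_lt_top.ne
    hmeas.aestronglyMeasurable ((ae_restrict_iff' measurableSet_Ioc).2 (ae_of_all _ fun s hs => ?_))
  have hs : s ∈ Ico 0 T := ⟨hs.1.le, hs.2.trans_lt ht.2⟩
  refine (norm_integral_le_integral_norm _).trans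
    (integral_mono (hw.integrable_mul_kernel hρ hx hs).norm hx.norm fun y => hw.norm_mul_le hs _)

theorem abs_sub_le (hw : IsFreeBoundarySolution μ F ρ z T k w)
    (hv : IsFreeBoundarySolution μ F ρ z T m v) (ht : t ∈ Ico 0 T) : |w x t - v x t| ≤ z x :=
  abs_sub_le_of_nonneg_of_le (hw.nonneg x t ht) (hw.le x t ht) (hv.nonneg x t ht) (hv.le x t ht)

theorem enorm_sub_le [SFinite μ] (hw : IsFreeBoundarySolution μ F ρ z T k w)
    (hv : IsFreeBoundarySolution μ F ρ z T m v) (hρ : Measurable (Function.uncurry ρ))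
    (hx : Integrable (fun y => z y * ρ y x) μ) (ht : t ∈ Ico 0 T)
    (hkx : k t < F x) (hmx : m t < F x) :
    ‖w x t - v x t‖ₑ ≤
      ‖w x 0 - v x 0‖ₑ + ∫⁻ s in Ioc 0 t, ∫⁻ y, ‖w y s - v y s‖ₑ * ‖ρ y x‖ₑ ∂μ := by
  refine (enorm_sub_le_of_eq_add_integral ht.1 (hw.intervalIntegrable_integral_mul_kernel hρ hx ht)
    (hv.intervalIntegrable_integral_mul_kernel hρ hx ht) (hw.eq_add_integral x t ht hkx)
    (hv.eq_add_integral x t ht hmx)).trans (add_le_add_right ?_ _)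
  refine setLIntegral_mono' measurableSet_Ioc fun s hs => ?_
  have hs : s ∈ Ico 0 T := ⟨hs.1.le, hs.2.trans_lt ht.2⟩
  rw [← integral_sub (hw.integrable_mul_kernel hρ hx hs) (hv.integrable_mul_kernel hρ hx hs)]
  simpa only [← sub_mul, enorm_mul] using
    enorm_integral_le_lintegral_enorm (μ := μ) fun y => (w y s - v y s) * ρ y x

theorem ae_enorm_sub_le [SFinite μ] (hw : IsFreeBoundarySolution μ F ρ z T k w)
    (hv : IsFreeBoundarySolution μ F ρ z T m v) (hFnull : ∀ a, μ (F ⁻¹' {a}) = 0)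
    (hρ : Measurable (Function.uncurry ρ)) (hρ_le : ∀ y, ∫⁻ x, ‖ρ y x‖ₑ ∂μ ≤ 1)
    (hz : Integrable z μ) (ht : t ∈ Ico 0 T) :
    ∀ᵐ x ∂μ, ‖w x t - v x t‖ₑ ≤
      (F ⁻¹' uIoo (k t) (m t)).indicator (fun x => ENNReal.ofReal (z x)) x +
        (‖w x 0 - v x 0‖ₑ + ∫⁻ s in Ioc 0 t, ∫⁻ y, ‖w y s - v y s‖ₑ * ‖ρ y x‖ₑ ∂μ) := by
  filter_upwards [ae_integrable_mul_kernel hρ hρ_le hz,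
    measure_eq_zero_iff_ae_notMem.1 (hFnull (max (k t) (m t)))] with x hx hxmax
  rcases le_or_gt (F x) (min (k t) (m t)) with hmin | hmin
  · simp [hw.eq_zero x t ht (hmin.trans (min_le_left _ _)),
      hv.eq_zero x t ht (hmin.trans (min_le_right _ _))]
  rcases lt_or_gt_of_ne (hxmax : F x ≠ max (k t) (m t)) with hmax | hmax
  · rw [indicator_of_mem (show x ∈ F ⁻¹' uIoo (k t) (m t) from ⟨hmin, hmax⟩),
      Real.enorm_eq_ofReal_abs]
    exact le_add_right (ENNReal.ofReal_le_ofReal (hw.abs_sub_le hv ht))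
  · exact le_add_left (hw.enorm_sub_le hv hρ hx ht ((le_max_left _ _).trans_lt hmax)
      ((le_max_right _ _).trans_lt hmax))

theorem measurable_enorm_sub (hw : IsFreeBoundarySolution μ F ρ z T k w)
    (hv : IsFreeBoundarySolution μ F ρ z T m v) (t : ℝ) :
    Measurable fun x => ‖w x t - v x t‖ₑ :=
  (hw.measurable.of_uncurry_right.sub hv.measurable.of_uncurry_right).enorm

theorem lintegral_enorm_sub_le [SFinite μ] (hw : IsFreeBoundarySolution μ F ρ z T k w)
    (hv : IsFreeBoundarySolution μ F ρ z T m v) (hF : Measurable F)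
    (hFnull : ∀ a, μ (F ⁻¹' {a}) = 0) (hρ : Measurable (Function.uncurry ρ))
    (hρ_le : ∀ y, ∫⁻ x, ‖ρ y x‖ₑ ∂μ ≤ 1) (hz : Integrable z μ) {η : ℝ}
    (hstrip : ∫ x in F ⁻¹' uIoo (k t) (m t), z x ∂μ ≤ η) (ht : t ∈ Ico 0 T) :
    ∫⁻ x, ‖w x t - v x t‖ₑ ∂μ ≤
      (∫⁻ x, ‖w x 0 - v x 0‖ₑ ∂μ + ENNReal.ofReal η) +
        ∫⁻ s in Ioc 0 t, ∫⁻ x, ‖w x s - v x s‖ₑ ∂μ := by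
  have hS : MeasurableSet (F ⁻¹' uIoo (k t) (m t)) := hF measurableSet_Ioo
  have hL : Measurable (Function.uncurry fun x (s : ℝ) =>
      ∫⁻ y, ‖w y s - v y s‖ₑ * ‖ρ y x‖ₑ ∂μ) :=
    Measurable.lintegral_prod_right'
      (f := fun p : (X × ℝ) × X => ‖w p.2 p.1.2 - v p.2 p.1.2‖ₑ * ‖ρ p.2 p.1.1‖ₑ)
      (by have := hw.measurable; have := hv.measurable; fun_prop)
  have hstrip' : ∫⁻ x in F ⁻¹' uIoo (k t) (m t), ENNReal.ofReal (z x) ∂μ ≤ ENNReal.ofReal η := by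
    rw [← ofReal_integral_eq_lintegral_ofReal hz.integrableOn
      (ae_of_all _ fun x => (hw.nonneg x t ht).trans (hw.le x t ht))]
    exact ENNReal.ofReal_le_ofReal hstrip
  have hkernel : ∫⁻ x, (∫⁻ s in Ioc 0 t, ∫⁻ y, ‖w y s - v y s‖ₑ * ‖ρ y x‖ₑ ∂μ) ∂μ ≤
      ∫⁻ s in Ioc 0 t, ∫⁻ x, ‖w x s - v x s‖ₑ ∂μ := by
    rw [lintegral_lintegral_swap hL.aemeasurable]
    exact lintegral_mono fun s =>
      lintegral_lintegral_mul_enorm_le hρ hρ_le (hw.measurable_enorm_sub hv s).aemeasurable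
  calc ∫⁻ x, ‖w x t - v x t‖ₑ ∂μ
      ≤ ∫⁻ x, ((F ⁻¹' uIoo (k t) (m t)).indicator (fun x => ENNReal.ofReal (z x)) x +
          (‖w x 0 - v x 0‖ₑ + ∫⁻ s in Ioc 0 t, ∫⁻ y, ‖w y s - v y s‖ₑ * ‖ρ y x‖ₑ ∂μ)) ∂μ :=
        lintegral_mono_ae (hw.ae_enorm_sub_le hv hFnull hρ hρ_le hz ht)
    _ = ∫⁻ x in F ⁻¹' uIoo (k t) (m t), ENNReal.ofReal (z x) ∂μ +
          (∫⁻ x, ‖w x 0 - v x 0‖ₑ ∂μ +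
            ∫⁻ x, (∫⁻ s in Ioc 0 t, ∫⁻ y, ‖w y s - v y s‖ₑ * ‖ρ y x‖ₑ ∂μ) ∂μ) := by
        rw [lintegral_add_right' _
            ((hw.measurable_enorm_sub hv 0).fun_add hL.lintegral_prod_right).aemeasurable,
          lintegral_indicator hS, lintegral_add_left (hw.measurable_enorm_sub hv 0)]
    _ ≤ ENNReal.ofReal η + (∫⁻ x, ‖w x 0 - v x 0‖ₑ ∂μ +
          ∫⁻ s in Ioc 0 t, ∫⁻ x, ‖w x s - v x s‖ₑ ∂μ) := by
        gcongr
    _ = _ := by ring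

theorem integral_abs_sub_le [SFinite μ] (hw : IsFreeBoundarySolution μ F ρ z T k w)
    (hv : IsFreeBoundarySolution μ F ρ z T m v) (hF : Measurable F)
    (hFnull : ∀ a, μ (F ⁻¹' {a}) = 0) (hρ : Measurable (Function.uncurry ρ))
    (hρ_le : ∀ y, ∫⁻ x, ‖ρ y x‖ₑ ∂μ ≤ 1) (hz : Integrable z μ) {η : ℝ}
    (hstrip : ∀ s ∈ Ico 0 T, ∫ x in F ⁻¹' uIoo (k s) (m s), z x ∂μ ≤ η) (ht : t ∈ Ico 0 T) :
    ∫ x, |w x t - v x t| ∂μ ≤ (∫ x, |w x 0 - v x 0| ∂μ + η) * Real.exp t := by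
  set Λ : ℝ → ℝ≥0∞ := fun s => ∫⁻ x, ‖w x s - v x s‖ₑ ∂μ
  have hΛ_le : ∀ s ∈ Ico 0 T, Λ s ≤ ∫⁻ x, ENNReal.ofReal (z x) ∂μ := fun s hs =>
    lintegral_mono fun x => by
      rw [Real.enorm_eq_ofReal_abs]
      exact ENNReal.ofReal_le_ofReal (hw.abs_sub_le hv hs)
  have hΛ0 : Λ 0 ≠ ∞ :=
    ((hΛ_le 0 ⟨le_rfl, ht.1.trans_lt ht.2⟩).trans_lt hz.lintegral_lt_top).ne
  have hη : 0 ≤ η :=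
    (integral_nonneg fun x => (hw.nonneg x t ht).trans (hw.le x t ht)).trans (hstrip t ht)
  have hgronwall : Λ t ≤ (Λ 0 + ENNReal.ofReal η) * ENNReal.ofReal (Real.exp t) :=
    lintegral_gronwall hz.lintegral_lt_top.ne hΛ_le (fun s hs =>
      hw.lintegral_enorm_sub_le hv hF hFnull hρ hρ_le hz (hstrip s hs) hs) t ht
  have htoReal : ∀ s, ∫ x, |w x s - v x s| ∂μ = (Λ s).toReal := fun s => by
    simpa only [Real.norm_eq_abs, Pi.sub_apply] using
      integral_norm_eq_lintegral_enorm (hw.measurable.of_uncurry_right.sub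
        hv.measurable.of_uncurry_right).aestronglyMeasurable
  rw [htoReal, htoReal]
  calc (Λ t).toReal ≤ ((Λ 0 + ENNReal.ofReal η) * ENNReal.ofReal (Real.exp t)).toReal :=
        ENNReal.toReal_mono (by finiteness) hgronwall
    _ = ((Λ 0).toReal + η) * Real.exp t := by
        rw [ENNReal.toReal_mul, ENNReal.toReal_add hΛ0 ENNReal.ofReal_ne_top,
          ENNReal.toReal_ofReal hη, ENNReal.toReal_ofReal (Real.exp_pos t).le]

end IsFreeBoundarySolution

theorem piecewise_boundary_stability_general {d : ℕ} (T : ℝ)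
    (J : ℕ) (hJ : 0 < J) (δ : ℝ) (hδ : δ = T / J)
    (k m : ℝ → ℝ)
    (hk_pc : ∀ j < J, ∀ t ∈ Ico ((j:ℝ) * δ) (((j:ℝ) + 1) * δ), k t = k ((j:ℝ) * δ))
    (hm_pc : ∀ j < J, ∀ t ∈ Ico ((j:ℝ) * δ) (((j:ℝ) + 1) * δ), m t = m ((j:ℝ) * δ))
    (F : EuclideanSpace ℝ (Fin d) → ℝ) (hF : Continuous F)
    (hFnull : ∀ a : ℝ, volume (F ⁻¹' {a}) = 0)
    (ρ : EuclideanSpace ℝ (Fin d) → EuclideanSpace ℝ (Fin d) → ℝ)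
    (hρ_meas : Measurable (Function.uncurry ρ))
    (hρ_nonneg : ∀ x y, 0 ≤ ρ x y) (hρ_int : ∀ x, Integrable (ρ x))
    (hρ_prob : ∀ x, ∫ y, ρ x y = 1)
    (z : EuclideanSpace ℝ (Fin d) → ℝ)
    (hz_int : Integrable z)
    (w v : EuclideanSpace ℝ (Fin d) → ℝ → ℝ)
    (hw_meas : Measurable (Function.uncurry w)) (hv_meas : Measurable (Function.uncurry v))
    (hw_nonneg : ∀ x, ∀ t ∈ Ico (0:ℝ) T, 0 ≤ w x t)
    (hv_nonneg : ∀ x, ∀ t ∈ Ico (0:ℝ) T, 0 ≤ v x t)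
    (hw_bdd : ∀ x, ∀ t ∈ Ico (0:ℝ) T, w x t ≤ z x)
    (hv_bdd : ∀ x, ∀ t ∈ Ico (0:ℝ) T, v x t ≤ z x)
    (hw_vanish : ∀ x, ∀ t ∈ Ico (0:ℝ) T, F x ≤ k t → w x t = 0)
    (hv_vanish : ∀ x, ∀ t ∈ Ico (0:ℝ) T, F x ≤ m t → v x t = 0)
    (hw_eq : ∀ x, ∀ t ∈ Ico (0:ℝ) T, k t < F x →
      w x t = w x 0 + ∫ s in (0:ℝ)..t, ∫ y, w y s * ρ y x)
    (hv_eq : ∀ x, ∀ t ∈ Ico (0:ℝ) T, m t < F x →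
      v x t = v x 0 + ∫ s in (0:ℝ)..t, ∫ y, v y s * ρ y x)
    (η : ℝ)
    (hη : η = (Finset.range J).sup' (Finset.nonempty_range_iff.mpr hJ.ne')
      (fun j => ∫ x in F ⁻¹' Ioo (min (k ((j:ℝ) * δ)) (m ((j:ℝ) * δ)))
        (max (k ((j:ℝ) * δ)) (m ((j:ℝ) * δ))), z x))
    (h0 : ∫ x, |w x 0 - v x 0| ≤ η) :
    ∀ t ∈ Ico (0:ℝ) T, ∫ x, |w x t - v x t| ≤ 2 * η * Real.exp T := by
  intro t ht
  have hδ_pos : 0 < δ := hδ ▸ div_pos (ht.1.trans_lt ht.2) (Nat.cast_pos.2 hJ)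
  have hstrip : ∀ s ∈ Ico 0 T, ∫ x in F ⁻¹' uIoo (k s) (m s), z x ≤ η := by
    intro s hs
    obtain ⟨j, hj, hsj⟩ := exists_lt_mem_Ico_nat_mul hδ_pos
      (by rwa [hδ, mul_div_cancel₀ T (Nat.cast_ne_zero.2 hJ.ne')] : s ∈ Ico 0 (J * δ))
    rw [hk_pc j hj s hsj, hm_pc j hj s hsj, hη]
    exact Finset.le_sup' (fun j : ℕ => ∫ x in F ⁻¹' uIoo (k (j * δ)) (m (j * δ)), z x)
      (Finset.mem_range.2 hj)
  have hρ_le : ∀ y, ∫⁻ x, ‖ρ y x‖ₑ ≤ 1 := fun y => by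
    rw [← ofReal_integral_norm_eq_lintegral_enorm (hρ_int y)]
    simp [Real.norm_eq_abs, abs_of_nonneg (hρ_nonneg y _), hρ_prob y]
  have hw : IsFreeBoundarySolution volume F ρ z T k w :=
    ⟨hw_meas, hw_nonneg, hw_bdd, hw_vanish, hw_eq⟩
  have hv : IsFreeBoundarySolution volume F ρ z T m v :=
    ⟨hv_meas, hv_nonneg, hv_bdd, hv_vanish, hv_eq⟩
  have hη_nonneg : 0 ≤ η := (integral_nonneg fun x => abs_nonneg _).trans h0
  calc ∫ x, |w x t - v x t| ≤ ((∫ x, |w x 0 - v x 0|) + η) * Real.exp t :=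
        hw.integral_abs_sub_le hv hF.measurable hFnull hρ_meas hρ_le hz_int hstrip ht
    _ ≤ (η + η) * Real.exp T := by gcongr; exact ht.2.le
    _ = 2 * η * Real.exp T := by ring

/-- Stability estimate for the integro-differential systems with piecewise
constant free boundaries `k` and `m`. -/
theorem piecewise_boundary_stability {d : ℕ} (T : ℝ) (hT : 0 < T)
    (J : ℕ) (hJ : 0 < J) (δ : ℝ) (hδ : δ = T / J)
    (k m : ℝ → ℝ)
    (hk_mono : MonotoneOn k (Ico (0:ℝ) T)) (hm_mono : MonotoneOn m (Ico (0:ℝ) T))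
    (hk_pc : ∀ j < J, ∀ t ∈ Ico ((j:ℝ) * δ) (((j:ℝ) + 1) * δ), k t = k ((j:ℝ) * δ))
    (hm_pc : ∀ j < J, ∀ t ∈ Ico ((j:ℝ) * δ) (((j:ℝ) + 1) * δ), m t = m ((j:ℝ) * δ))
    (F : EuclideanSpace ℝ (Fin d) → ℝ) (hF : Continuous F)
    (hFnull : ∀ a : ℝ, volume (F ⁻¹' {a}) = 0)
    (ρ : EuclideanSpace ℝ (Fin d) → EuclideanSpace ℝ (Fin d) → ℝ)
    (hρ_meas : Measurable (Function.uncurry ρ))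
    (hρ_nonneg : ∀ x y, 0 ≤ ρ x y) (hρ_int : ∀ x, Integrable (ρ x))
    (hρ_prob : ∀ x, ∫ y, ρ x y = 1)
    (z : EuclideanSpace ℝ (Fin d) → ℝ) (hz_nonneg : ∀ x, 0 ≤ z x)
    (hz_int : Integrable z)
    (w v : EuclideanSpace ℝ (Fin d) → ℝ → ℝ)
    (hw_meas : Measurable (Function.uncurry w)) (hv_meas : Measurable (Function.uncurry v))
    (hw_nonneg : ∀ x, ∀ t ∈ Ico (0:ℝ) T, 0 ≤ w x t)
    (hv_nonneg : ∀ x, ∀ t ∈ Ico (0:ℝ) T, 0 ≤ v x t)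
    (hw_bdd : ∀ x, ∀ t ∈ Ico (0:ℝ) T, w x t ≤ z x)
    (hv_bdd : ∀ x, ∀ t ∈ Ico (0:ℝ) T, v x t ≤ z x)
    (hw_vanish : ∀ x, ∀ t ∈ Ico (0:ℝ) T, F x ≤ k t → w x t = 0)
    (hv_vanish : ∀ x, ∀ t ∈ Ico (0:ℝ) T, F x ≤ m t → v x t = 0)
    (hw_eq : ∀ x, ∀ t ∈ Ico (0:ℝ) T, k t < F x →
      w x t = w x 0 + ∫ s in (0:ℝ)..t, ∫ y, w y s * ρ y x)
    (hv_eq : ∀ x, ∀ t ∈ Ico (0:ℝ) T, m t < F x →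
      v x t = v x 0 + ∫ s in (0:ℝ)..t, ∫ y, v y s * ρ y x)
    (η : ℝ)
    (hη : η = (Finset.range J).sup' (Finset.nonempty_range_iff.mpr hJ.ne')
      (fun j => ∫ x in F ⁻¹' Ioo (min (k ((j:ℝ) * δ)) (m ((j:ℝ) * δ)))
        (max (k ((j:ℝ) * δ)) (m ((j:ℝ) * δ))), z x))
    (h0 : ∫ x, |w x 0 - v x 0| ≤ η) :
    ∀ t ∈ Ico (0:ℝ) T, ∫ x, |w x t - v x t| ≤ 2 * η * Real.exp T :=
  piecewise_boundary_stability_general T J hJ δ hδ k m hk_pc hm_pc F hF hFnull ρ hρ_meas hρ_nonneg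
    hρ_int hρ_prob z hz_int w v hw_meas hv_meas hw_nonneg hv_nonneg hw_bdd hv_bdd hw_vanish
    hv_vanish hw_eq hv_eq η hη h0
end

section
/- Let T > 0, let D ⊆ ℝ^d be a Borel set, let ρ : ℝ^d × ℝ^d → [0,∞) be measurable with ρ(x,·) a probability density for each x and ρ(x,y) ≤ c̃ ρ̃(y−x) for a probability density ρ̃ on ℝ^d and a constant c̃, and let w₀ : ℝ^d → [0,∞) be a bounded integrable function vanishing outside D. Then there exists exactly one measurable function u : ℝ^d × [0,T] → [0,∞), bounded on ℝ^d × [0,T] and with u(·,t) integrable for each t, such that u(x,t) = 0 for all x ∉ D and t ∈ [0,T], and u(x,t) = w₀(x) + ∫₀ᵗ ∫_{ℝ^d} u(y,s) ρ(y,x) dy ds for all x ∈ D and t ∈ [0,T]. -/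
/-!
The solution is the exponential-type series `u x t = ∑ tⁿ / n! * wₙ x` with `w₀` the initial
datum and `wₙ₊₁ = 𝟙_D * ∫ wₙ y * ρ y x dy`. The domination `ρ x y ≤ c * ρ̃ (y - x)` bounds the
column integrals `∫ ρ y x dy` by `c`, hence `‖wₙ‖_∞ ≤ ‖w₀‖_∞ cⁿ`, which makes the series and its
termwise time integral converge; `∫ ρ x y dy = 1` makes the operator an `L¹` contraction, so every
`u · t` is integrable. For uniqueness, the difference of two bounded solutions is bounded by `M`
and solves the homogeneous equation, so iterating gives the bound `M (c t)ⁿ / n!` for every `n`.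
-/

open MeasureTheory Set

/-- `u` solves the linear nonlocal growth equation on the fixed domain `D` up to
time `T`, with absorption outside `D` and initial condition `w₀`. -/
def IsNonlocalGrowthSolution {d : ℕ} (T : ℝ) (D : Set (EuclideanSpace ℝ (Fin d)))
    (ρ : EuclideanSpace ℝ (Fin d) → EuclideanSpace ℝ (Fin d) → ℝ)
    (w₀ : EuclideanSpace ℝ (Fin d) → ℝ)
    (u : EuclideanSpace ℝ (Fin d) → ℝ → ℝ) : Prop :=
  Measurable (Function.uncurry u) ∧
  (∀ x, ∀ t ∈ Icc (0:ℝ) T, 0 ≤ u x t) ∧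
  (∃ C : ℝ, ∀ x, ∀ t ∈ Icc (0:ℝ) T, u x t ≤ C) ∧
  (∀ t ∈ Icc (0:ℝ) T, Integrable fun x => u x t) ∧
  (∀ x ∉ D, ∀ t ∈ Icc (0:ℝ) T, u x t = 0) ∧
  (∀ x ∈ D, ∀ t ∈ Icc (0:ℝ) T, u x t = w₀ x + ∫ s in (0:ℝ)..t, ∫ y, u y s * ρ y x)

open Function Filter
open scoped Nat

section ExponentialSeries

lemma integral_pow_div_factorial (t : ℝ) (n : ℕ) :
    ∫ s in (0 : ℝ)..t, s ^ n / n ! = t ^ (n + 1) / (n + 1)! := by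
  rw [intervalIntegral.integral_div, integral_pow, Nat.factorial_succ]
  push_cast
  field_simp
  ring

variable {a : ℕ → ℝ} {C r : ℝ}

lemma norm_pow_div_factorial_mul_le {x : ℝ} {n : ℕ} (hx : ‖x‖ ≤ C * r ^ n) (t : ℝ) :
    ‖t ^ n / n ! * x‖ ≤ C * ((|t| * r) ^ n / n !) := by
  rw [norm_mul, Real.norm_eq_abs, abs_div, abs_pow, Nat.abs_cast, mul_pow]
  calc |t| ^ n / n ! * ‖x‖ ≤ |t| ^ n / n ! * (C * r ^ n) := by gcongr
    _ = C * (|t| ^ n * r ^ n / n !) := by ring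

lemma summable_pow_div_factorial_mul (ha : ∀ n, ‖a n‖ ≤ C * r ^ n) (t : ℝ) :
    Summable fun n => t ^ n / n ! * a n :=
  .of_norm_bounded ((Real.summable_pow_div_factorial (|t| * r)).mul_left C)
    fun n => norm_pow_div_factorial_mul_le (ha n) t

lemma abs_tsum_pow_div_factorial_mul_le (ha : ∀ n, ‖a n‖ ≤ C * r ^ n) (t : ℝ) :
    |∑' n, t ^ n / n ! * a n| ≤ C * Real.exp (|t| * r) := by
  rw [← Real.norm_eq_abs, Real.exp_eq_exp_ℝ]
  exact tsum_of_norm_bounded ((NormedSpace.expSeries_div_hasSum_exp (|t| * r)).mul_left C)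
    fun n => norm_pow_div_factorial_mul_le (ha n) t

lemma tsum_pow_div_factorial_mul_eq_add_integral (ha : ∀ n, ‖a n‖ ≤ C * r ^ n) (t : ℝ) :
    ∑' n, t ^ n / n ! * a n = a 0 + ∫ s in (0 : ℝ)..t, ∑' n, s ^ n / n ! * a (n + 1) := by
  have hbound : ∀ n, ∀ s ∈ uIoc 0 t,
      ‖s ^ n / n ! * a (n + 1)‖ ≤ C * r * ((|t| * r) ^ n / n !) := by
    intro n s hs
    have hst : |s| ≤ |t| := by
      simpa using abs_sub_left_of_mem_uIcc (uIoc_subset_uIcc hs)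
    rw [norm_mul, Real.norm_eq_abs, abs_div, abs_pow, Nat.abs_cast]
    calc |s| ^ n / n ! * ‖a (n + 1)‖ ≤ |t| ^ n / n ! * (C * r ^ (n + 1)) := by
          gcongr
          exact ha _
      _ = C * r * ((|t| * r) ^ n / n !) := by ring
  have hshift : ∀ n, ‖a (n + 1)‖ ≤ C * r * r ^ n := fun n => by
    rw [mul_assoc, ← pow_succ']; exact ha (n + 1)
  have hsum := intervalIntegral.hasSum_integral_of_dominated_convergence
    (μ := volume) (F := fun n s => s ^ n / n ! * a (n + 1))
    (fun n _ => C * r * ((|t| * r) ^ n / n !))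
    (fun n => (((continuous_pow n).div_const _).mul continuous_const).aestronglyMeasurable)
    (fun n => ae_of_all _ (hbound n))
    (ae_of_all _ fun _ _ => (Real.summable_pow_div_factorial _).mul_left _)
    intervalIntegrable_const
    (ae_of_all _ fun s _ => (summable_pow_div_factorial_mul hshift s).hasSum)
  rw [(summable_pow_div_factorial_mul ha t).tsum_eq_zero_add, ← hsum.tsum_eq]
  congr 1
  · simp
  · congr 1 with n
    rw [intervalIntegral.integral_mul_const, integral_pow_div_factorial]

lemma eq_zero_of_forall_abs_le_pow_div_factorial {x M r : ℝ}
    (h : ∀ n : ℕ, |x| ≤ M * (r ^ n / n !)) : x = 0 := by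
  have hlim : Tendsto (fun n : ℕ => M * (r ^ n / n !)) atTop (nhds 0) := by
    simpa using (Real.summable_pow_div_factorial r).tendsto_atTop_zero.const_mul M
  exact abs_nonpos_iff.mp (ge_of_tendsto' hlim h)

end ExponentialSeries

lemma integrable_tsum_of_summable_integral_norm {α : Type*} [MeasurableSpace α] {μ : Measure α}
    {F : ℕ → α → ℝ} (hF_meas : ∀ n, Measurable (F n)) (hF_int : ∀ n, Integrable (F n) μ)
    (hF_sum : Summable fun n => ∫ x, ‖F n x‖ ∂μ) :
    Integrable (fun x => ∑' n, F n x) μ := by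
  refine ⟨(Measurable.tsum hF_meas).aestronglyMeasurable, ?_⟩
  rw [hasFiniteIntegral_iff_enorm]
  calc ∫⁻ x, ‖∑' n, F n x‖ₑ ∂μ ≤ ∫⁻ x, ∑' n, ‖F n x‖ₑ ∂μ :=
        lintegral_mono fun x => enorm_tsum_le_tsum_enorm
    _ = ∑' n, ∫⁻ x, ‖F n x‖ₑ ∂μ := lintegral_tsum fun n => (hF_meas n).enorm.aemeasurable
    _ = ∑' n, ENNReal.ofReal (∫ x, ‖F n x‖ ∂μ) := by
        simp_rw [ofReal_integral_norm_eq_lintegral_enorm (hF_int _)]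
    _ = ENNReal.ofReal (∑' n, ∫ x, ‖F n x‖ ∂μ) :=
        (ENNReal.ofReal_tsum_of_nonneg (fun n => integral_nonneg fun x => norm_nonneg _)
          hF_sum).symm
    _ < ⊤ := ENNReal.ofReal_lt_top

section Kernel

variable {α : Type*} [MeasurableSpace α] {μ : Measure α} {ρ : α → α → ℝ} {c : ℝ}

structure IsColumnBoundedKernel (μ : Measure α) (ρ : α → α → ℝ) (c : ℝ) : Prop where
  measurable : Measurable (uncurry ρ)
  nonneg : ∀ y x, 0 ≤ ρ y x
  integrable_col : ∀ x, Integrable (fun y => ρ y x) μ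
  integral_col_le : ∀ x, ∫ y, ρ y x ∂μ ≤ c

noncomputable def kernelOp (μ : Measure α) (ρ : α → α → ℝ) (f : α → ℝ) (x : α) : ℝ :=
  ∫ y, f y * ρ y x ∂μ

lemma kernelOp_const_mul (a : ℝ) (f : α → ℝ) (x : α) :
    kernelOp μ ρ (fun y => a * f y) x = a * kernelOp μ ρ f x := by
  simp only [kernelOp, mul_assoc, integral_const_mul]

namespace IsColumnBoundedKernel

lemma of_le_comp_sub {G : Type*} [MeasurableSpace G] [AddGroup G] [MeasurableAdd G]
    [MeasurableNeg G] {μ : Measure G} [μ.IsNegInvariant] [μ.IsAddLeftInvariant]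
    {ρ : G → G → ℝ} {ρt : G → ℝ} {c : ℝ} (hρ : Measurable (uncurry ρ))
    (hρ_nonneg : ∀ y x, 0 ≤ ρ y x) (hρt : Integrable ρt μ) (hρt_one : ∫ z, ρt z ∂μ = 1)
    (hdom : ∀ x y, ρ x y ≤ c * ρt (y - x)) : IsColumnBoundedKernel μ ρ c := by
  have hshift : ∀ x, Integrable (fun y => c * ρt (x - y)) μ := fun x =>
    ((integrable_comp_sub_left ρt x).2 hρt).const_mul c
  have hcol : ∀ x, Integrable (fun y => ρ y x) μ := fun x =>
    (hshift x).mono' (hρ.comp (measurable_id.prodMk measurable_const)).aestronglyMeasurable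
      (ae_of_all _ fun y => by
        rw [Real.norm_of_nonneg (hρ_nonneg y x)]; exact hdom y x)
  refine ⟨hρ, hρ_nonneg, hcol, fun x => ?_⟩
  calc ∫ y, ρ y x ∂μ ≤ ∫ y, c * ρt (x - y) ∂μ :=
        integral_mono (hcol x) (hshift x) fun y => hdom y x
    _ = c := by rw [integral_const_mul, integral_sub_left_eq_self ρt μ x, hρt_one, mul_one]

variable {f g : α → ℝ} {M : ℝ}

lemma const_nonneg [Nonempty α] (hK : IsColumnBoundedKernel μ ρ c) : 0 ≤ c :=
  let x := Classical.arbitrary α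
  (integral_nonneg fun y => hK.nonneg y x).trans (hK.integral_col_le x)

lemma integrable_mul (hK : IsColumnBoundedKernel μ ρ c) (hf : AEStronglyMeasurable f μ)
    (hfM : ∀ y, ‖f y‖ ≤ M) (x : α) : Integrable (fun y => f y * ρ y x) μ :=
  (hK.integrable_col x).bdd_mul hf (ae_of_all _ hfM)

lemma integral_norm_mul_le (hK : IsColumnBoundedKernel μ ρ c) (hfM : ∀ y, ‖f y‖ ≤ M) (x : α) :
    ∫ y, ‖f y * ρ y x‖ ∂μ ≤ M * c := by
  have hM : 0 ≤ M := (norm_nonneg _).trans (hfM x)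
  calc ∫ y, ‖f y * ρ y x‖ ∂μ ≤ ∫ y, M * ρ y x ∂μ := by
        refine integral_mono_of_nonneg (ae_of_all _ fun y => norm_nonneg _)
          ((hK.integrable_col x).const_mul M) (ae_of_all _ fun y => ?_)
        dsimp only
        rw [norm_mul, Real.norm_of_nonneg (hK.nonneg y x)]
        exact mul_le_mul_of_nonneg_right (hfM y) (hK.nonneg y x)
    _ = M * ∫ y, ρ y x ∂μ := integral_const_mul _ _
    _ ≤ M * c := mul_le_mul_of_nonneg_left (hK.integral_col_le x) hM

lemma norm_kernelOp_le (hK : IsColumnBoundedKernel μ ρ c) (hfM : ∀ y, ‖f y‖ ≤ M) (x : α) :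
    ‖kernelOp μ ρ f x‖ ≤ M * c :=
  (norm_integral_le_integral_norm _).trans (hK.integral_norm_mul_le hfM x)

lemma kernelOp_nonneg (hK : IsColumnBoundedKernel μ ρ c) (hf : ∀ y, 0 ≤ f y) (x : α) :
    0 ≤ kernelOp μ ρ f x :=
  integral_nonneg fun y => mul_nonneg (hf y) (hK.nonneg y x)

lemma kernelOp_sub (hK : IsColumnBoundedKernel μ ρ c) (hf : AEStronglyMeasurable f μ)
    (hg : AEStronglyMeasurable g μ) (hfM : ∀ y, ‖f y‖ ≤ M) (hgM : ∀ y, ‖g y‖ ≤ M) (x : α) :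
    kernelOp μ ρ (fun y => f y - g y) x = kernelOp μ ρ f x - kernelOp μ ρ g x := by
  simp only [kernelOp, sub_mul]
  exact integral_sub (hK.integrable_mul hf hfM x) (hK.integrable_mul hg hgM x)

lemma kernelOp_tsum (hK : IsColumnBoundedKernel μ ρ c) {F : ℕ → α → ℝ} {b : ℕ → ℝ}
    (hF : ∀ n, AEStronglyMeasurable (F n) μ) (hFb : ∀ n y, ‖F n y‖ ≤ b n) (hb : Summable b)
    (x : α) : kernelOp μ ρ (fun y => ∑' n, F n y) x = ∑' n, kernelOp μ ρ (F n) x := by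
  simp only [kernelOp, ← tsum_mul_right]
  exact (integral_tsum_of_summable_integral_norm (fun n => hK.integrable_mul (hF n) (hFb n) x)
    (.of_nonneg_of_le (fun n => integral_nonneg fun y => norm_nonneg _)
      (fun n => hK.integral_norm_mul_le (hFb n) x)
      (hb.mul_right c))).symm

lemma measurable_kernelOp [SFinite μ] (hK : IsColumnBoundedKernel μ ρ c) (hf : Measurable f) :
    Measurable (kernelOp μ ρ f) :=
  ((hf.comp measurable_snd).mul (hK.measurable.comp measurable_swap)).stronglyMeasurable
    |>.integral_prod_right'.measurable

lemma measurable_kernelOp_param {β : Type*} [MeasurableSpace β] [SFinite μ]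
    (hK : IsColumnBoundedKernel μ ρ c) {v : α → β → ℝ} (hv : Measurable (uncurry v)) (x : α) :
    Measurable fun s => kernelOp μ ρ (fun y => v y s) x :=
  ((hv.comp measurable_swap).mul
      (hK.measurable.comp (measurable_snd.prodMk measurable_const))).stronglyMeasurable
    |>.integral_prod_right'.measurable

lemma integrable_uncurry_mul [SFinite μ] (hK : IsColumnBoundedKernel μ ρ c)
    (hρ_row_int : ∀ y, Integrable (ρ y) μ) (hρ_row : ∀ y, ∫ x, ρ y x ∂μ = 1)
    (hf : Integrable f μ) : Integrable (uncurry fun x y => f y * ρ y x) (μ.prod μ) := by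
  have hmeas : AEStronglyMeasurable (uncurry fun x y => f y * ρ y x) (μ.prod μ) :=
    hf.aestronglyMeasurable.comp_snd.mul (hK.measurable.comp measurable_swap).aestronglyMeasurable
  refine (integrable_prod_iff' hmeas).2 ⟨ae_of_all _ fun y => (hρ_row_int y).const_mul (f y), ?_⟩
  refine hf.norm.congr (ae_of_all _ fun y => ?_)
  simp only [uncurry_apply_pair, norm_mul, Real.norm_of_nonneg (hK.nonneg y _),
    integral_const_mul, hρ_row, mul_one]

lemma integrable_kernelOp [SFinite μ] (hK : IsColumnBoundedKernel μ ρ c)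
    (hρ_row_int : ∀ y, Integrable (ρ y) μ) (hρ_row : ∀ y, ∫ x, ρ y x ∂μ = 1)
    (hf : Integrable f μ) : Integrable (kernelOp μ ρ f) μ :=
  (hK.integrable_uncurry_mul hρ_row_int hρ_row hf).integral_prod_left

lemma integral_kernelOp [SFinite μ] (hK : IsColumnBoundedKernel μ ρ c)
    (hρ_row_int : ∀ y, Integrable (ρ y) μ) (hρ_row : ∀ y, ∫ x, ρ y x ∂μ = 1)
    (hf : Integrable f μ) : ∫ x, kernelOp μ ρ f x ∂μ = ∫ y, f y ∂μ := by
  simp only [kernelOp]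
  rw [integral_integral_swap (hK.integrable_uncurry_mul hρ_row_int hρ_row hf)]
  simp only [integral_const_mul, hρ_row, mul_one]

lemma integral_norm_kernelOp_le [SFinite μ] (hK : IsColumnBoundedKernel μ ρ c)
    (hρ_row_int : ∀ y, Integrable (ρ y) μ) (hρ_row : ∀ y, ∫ x, ρ y x ∂μ = 1)
    (hf : Integrable f μ) : ∫ x, ‖kernelOp μ ρ f x‖ ∂μ ≤ ∫ y, ‖f y‖ ∂μ := by
  have hnorm : ∀ x, ‖kernelOp μ ρ f x‖ ≤ kernelOp μ ρ (fun y => ‖f y‖) x := fun x => by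
    simpa only [kernelOp, norm_mul, Real.norm_of_nonneg (hK.nonneg _ x)] using
      norm_integral_le_integral_norm (fun y => f y * ρ y x)
  calc ∫ x, ‖kernelOp μ ρ f x‖ ∂μ ≤ ∫ x, kernelOp μ ρ (fun y => ‖f y‖) x ∂μ :=
        integral_mono (hK.integrable_kernelOp hρ_row_int hρ_row hf).norm
          (hK.integrable_kernelOp hρ_row_int hρ_row hf.norm) hnorm
    _ = ∫ y, ‖f y‖ ∂μ := hK.integral_kernelOp hρ_row_int hρ_row hf.norm

end IsColumnBoundedKernel
end Kernel

section Picard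

variable {α : Type*} [MeasurableSpace α] {μ : Measure α} {ρ : α → α → ℝ} {c : ℝ}
  {D : Set α} {w₀ : α → ℝ} {C : ℝ}

/-- `picardTerm n` is the `n`-th time derivative at `t = 0` of the solution, whose Taylor series
is `picardSeries`. -/
noncomputable def picardTerm (μ : Measure α) (ρ : α → α → ℝ) (D : Set α) (w₀ : α → ℝ) :
    ℕ → α → ℝ
  | 0 => w₀
  | n + 1 => D.indicator (kernelOp μ ρ (picardTerm μ ρ D w₀ n))

noncomputable def picardSeries (μ : Measure α) (ρ : α → α → ℝ) (D : Set α) (w₀ : α → ℝ)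
    (x : α) (t : ℝ) : ℝ :=
  ∑' n, t ^ n / n ! * picardTerm μ ρ D w₀ n x

lemma picardTerm_succ_of_mem {x : α} (hx : x ∈ D) (n : ℕ) :
    picardTerm μ ρ D w₀ (n + 1) x = kernelOp μ ρ (picardTerm μ ρ D w₀ n) x :=
  indicator_of_mem hx _

lemma picardTerm_of_notMem (hw₀ : ∀ x ∉ D, w₀ x = 0) {x : α} (hx : x ∉ D) :
    ∀ n, picardTerm μ ρ D w₀ n x = 0
  | 0 => hw₀ x hx
  | _ + 1 => indicator_of_notMem hx _

lemma picardTerm_nonneg (hK : IsColumnBoundedKernel μ ρ c) (hw₀ : ∀ x, 0 ≤ w₀ x) :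
    ∀ n x, 0 ≤ picardTerm μ ρ D w₀ n x
  | 0 => hw₀
  | n + 1 => indicator_nonneg fun x _ => hK.kernelOp_nonneg (picardTerm_nonneg hK hw₀ n) x

lemma measurable_picardTerm [SFinite μ] (hK : IsColumnBoundedKernel μ ρ c) (hD : MeasurableSet D)
    (hw₀ : Measurable w₀) : ∀ n, Measurable (picardTerm μ ρ D w₀ n)
  | 0 => hw₀
  | n + 1 => (hK.measurable_kernelOp (measurable_picardTerm hK hD hw₀ n)).indicator hD

lemma norm_picardTerm_le (hK : IsColumnBoundedKernel μ ρ c) (hw₀ : ∀ x, ‖w₀ x‖ ≤ C) :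
    ∀ n x, ‖picardTerm μ ρ D w₀ n x‖ ≤ C * c ^ n
  | 0, x => by simpa [picardTerm] using hw₀ x
  | n + 1, x => calc
      ‖picardTerm μ ρ D w₀ (n + 1) x‖ ≤ ‖kernelOp μ ρ (picardTerm μ ρ D w₀ n) x‖ :=
        norm_indicator_le_norm_self _ x
      _ ≤ C * c ^ n * c := hK.norm_kernelOp_le (norm_picardTerm_le hK hw₀ n) x
      _ = C * c ^ (n + 1) := by ring

lemma integrable_picardTerm [SFinite μ] (hK : IsColumnBoundedKernel μ ρ c) (hD : MeasurableSet D)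
    (hρ_row_int : ∀ y, Integrable (ρ y) μ) (hρ_row : ∀ y, ∫ x, ρ y x ∂μ = 1)
    (hw₀ : Integrable w₀ μ) : ∀ n, Integrable (picardTerm μ ρ D w₀ n) μ
  | 0 => hw₀
  | n + 1 =>
    (hK.integrable_kernelOp hρ_row_int hρ_row
      (integrable_picardTerm hK hD hρ_row_int hρ_row hw₀ n)).indicator hD

lemma integral_norm_picardTerm_le [SFinite μ] (hK : IsColumnBoundedKernel μ ρ c)
    (hD : MeasurableSet D) (hρ_row_int : ∀ y, Integrable (ρ y) μ)
    (hρ_row : ∀ y, ∫ x, ρ y x ∂μ = 1) (hw₀ : Integrable w₀ μ) :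
    ∀ n, ∫ x, ‖picardTerm μ ρ D w₀ n x‖ ∂μ ≤ ∫ x, ‖w₀ x‖ ∂μ
  | 0 => le_rfl
  | n + 1 => calc
      ∫ x, ‖picardTerm μ ρ D w₀ (n + 1) x‖ ∂μ
          ≤ ∫ x, ‖kernelOp μ ρ (picardTerm μ ρ D w₀ n) x‖ ∂μ := by
        refine integral_mono ((integrable_picardTerm hK hD hρ_row_int hρ_row hw₀ (n + 1)).norm)
          (hK.integrable_kernelOp hρ_row_int hρ_row
            (integrable_picardTerm hK hD hρ_row_int hρ_row hw₀ n)).norm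
          fun x => norm_indicator_le_norm_self _ x
      _ ≤ ∫ x, ‖picardTerm μ ρ D w₀ n x‖ ∂μ :=
        hK.integral_norm_kernelOp_le hρ_row_int hρ_row
          (integrable_picardTerm hK hD hρ_row_int hρ_row hw₀ n)
      _ ≤ ∫ x, ‖w₀ x‖ ∂μ := integral_norm_picardTerm_le hK hD hρ_row_int hρ_row hw₀ n

lemma measurable_uncurry_picardSeries [SFinite μ] (hK : IsColumnBoundedKernel μ ρ c)
    (hD : MeasurableSet D) (hw₀ : Measurable w₀) :
    Measurable (uncurry (picardSeries μ ρ D w₀)) :=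
  Measurable.tsum fun n => ((measurable_snd.pow_const n).div_const _).mul
    ((measurable_picardTerm hK hD hw₀ n).comp measurable_fst)

lemma picardSeries_nonneg (hK : IsColumnBoundedKernel μ ρ c) (hw₀ : ∀ x, 0 ≤ w₀ x) (x : α)
    {t : ℝ} (ht : 0 ≤ t) : 0 ≤ picardSeries μ ρ D w₀ x t :=
  tsum_nonneg fun n => mul_nonneg (by positivity) (picardTerm_nonneg hK hw₀ n x)

lemma abs_picardSeries_le (hK : IsColumnBoundedKernel μ ρ c) (hw₀ : ∀ x, ‖w₀ x‖ ≤ C) (x : α)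
    (t : ℝ) : |picardSeries μ ρ D w₀ x t| ≤ C * Real.exp (|t| * c) :=
  abs_tsum_pow_div_factorial_mul_le (fun n => norm_picardTerm_le hK hw₀ n x) t

lemma picardSeries_of_notMem (hw₀ : ∀ x ∉ D, w₀ x = 0) {x : α} (hx : x ∉ D) (t : ℝ) :
    picardSeries μ ρ D w₀ x t = 0 := by
  simp [picardSeries, picardTerm_of_notMem hw₀ hx]

lemma integrable_picardSeries [SFinite μ] (hK : IsColumnBoundedKernel μ ρ c)
    (hD : MeasurableSet D) (hρ_row_int : ∀ y, Integrable (ρ y) μ)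
    (hρ_row : ∀ y, ∫ x, ρ y x ∂μ = 1) (hw₀_meas : Measurable w₀) (hw₀ : Integrable w₀ μ)
    (t : ℝ) : Integrable (fun x => picardSeries μ ρ D w₀ x t) μ := by
  refine integrable_tsum_of_summable_integral_norm
    (fun n => measurable_const.mul (measurable_picardTerm hK hD hw₀_meas n))
    (fun n => (integrable_picardTerm hK hD hρ_row_int hρ_row hw₀ n).const_mul _) ?_
  refine .of_nonneg_of_le (fun n => integral_nonneg fun x => norm_nonneg _) (fun n => ?_)
    ((Real.summable_pow_div_factorial |t|).mul_right (∫ x, ‖w₀ x‖ ∂μ))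
  simp only [norm_mul, integral_const_mul, Real.norm_eq_abs, abs_div, abs_pow, Nat.abs_cast]
  exact mul_le_mul_of_nonneg_left
    (by simpa only [Real.norm_eq_abs] using
      integral_norm_picardTerm_le hK hD hρ_row_int hρ_row hw₀ n) (by positivity)

lemma kernelOp_picardSeries [SFinite μ] (hK : IsColumnBoundedKernel μ ρ c)
    (hD : MeasurableSet D) (hw₀_meas : Measurable w₀) (hw₀ : ∀ x, ‖w₀ x‖ ≤ C) {x : α}
    (hx : x ∈ D) (s : ℝ) :
    kernelOp μ ρ (fun y => picardSeries μ ρ D w₀ y s) x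
      = ∑' n, s ^ n / n ! * picardTerm μ ρ D w₀ (n + 1) x := by
  simp only [picardSeries]
  rw [hK.kernelOp_tsum (F := fun n y => s ^ n / n ! * picardTerm μ ρ D w₀ n y)
    (fun n => (measurable_const.mul (measurable_picardTerm hK hD hw₀_meas n)).aestronglyMeasurable)
    (fun n y => norm_pow_div_factorial_mul_le (norm_picardTerm_le hK hw₀ n y) s)
    ((Real.summable_pow_div_factorial _).mul_left C)]
  simp only [kernelOp_const_mul, picardTerm_succ_of_mem hx]

lemma picardSeries_eq_add_integral [SFinite μ] (hK : IsColumnBoundedKernel μ ρ c)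
    (hD : MeasurableSet D) (hw₀_meas : Measurable w₀) (hw₀ : ∀ x, ‖w₀ x‖ ≤ C) {x : α}
    (hx : x ∈ D) (t : ℝ) :
    picardSeries μ ρ D w₀ x t
      = w₀ x + ∫ s in (0 : ℝ)..t, kernelOp μ ρ (fun y => picardSeries μ ρ D w₀ y s) x := by
  simp only [kernelOp_picardSeries hK hD hw₀_meas hw₀ hx]
  exact tsum_pow_div_factorial_mul_eq_add_integral (fun n => norm_picardTerm_le hK hw₀ n x) t

end Picard

section Solution

variable {d : ℕ} {T c C : ℝ} {D : Set (EuclideanSpace ℝ (Fin d))}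
  {ρ : EuclideanSpace ℝ (Fin d) → EuclideanSpace ℝ (Fin d) → ℝ}
  {w₀ : EuclideanSpace ℝ (Fin d) → ℝ}

lemma isNonlocalGrowthSolution_picardSeries (hK : IsColumnBoundedKernel volume ρ c)
    (hD : MeasurableSet D) (hρ_row_int : ∀ y, Integrable (ρ y))
    (hρ_row : ∀ y, ∫ x, ρ y x = 1) (hw₀_meas : Measurable w₀) (hw₀_nonneg : ∀ x, 0 ≤ w₀ x)
    (hw₀_le : ∀ x, w₀ x ≤ C) (hw₀_int : Integrable w₀) (hw₀_vanish : ∀ x ∉ D, w₀ x = 0) :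
    IsNonlocalGrowthSolution T D ρ w₀ (picardSeries volume ρ D w₀) := by
  have hw₀_norm : ∀ x, ‖w₀ x‖ ≤ C := fun x =>
    (Real.norm_of_nonneg (hw₀_nonneg x)).trans_le (hw₀_le x)
  refine ⟨measurable_uncurry_picardSeries hK hD hw₀_meas,
    fun x t ht => picardSeries_nonneg hK hw₀_nonneg x ht.1,
    ⟨C * Real.exp (T * c), fun x t ht => ?_⟩,
    fun t _ => integrable_picardSeries hK hD hρ_row_int hρ_row hw₀_meas hw₀_int t,
    fun x hx t _ => picardSeries_of_notMem hw₀_vanish hx t,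
    fun x hx t _ => picardSeries_eq_add_integral hK hD hw₀_meas hw₀_norm hx t⟩
  have hC : 0 ≤ C := (hw₀_nonneg 0).trans (hw₀_le 0)
  calc picardSeries volume ρ D w₀ x t ≤ C * Real.exp (|t| * c) :=
        (le_abs_self _).trans (abs_picardSeries_le hK hw₀_norm x t)
    _ ≤ C * Real.exp (T * c) := by
        rw [abs_of_nonneg ht.1]
        gcongr
        exacts [hK.const_nonneg, ht.2]

namespace IsNonlocalGrowthSolution

variable {u v : EuclideanSpace ℝ (Fin d) → ℝ → ℝ}

lemma exists_norm_le (hu : IsNonlocalGrowthSolution T D ρ w₀ u) :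
    ∃ C, ∀ x, ∀ t ∈ Icc 0 T, ‖u x t‖ ≤ C := by
  obtain ⟨-, hnonneg, ⟨C, hC⟩, -⟩ := hu
  exact ⟨C, fun x t ht => (Real.norm_of_nonneg (hnonneg x t ht)).trans_le (hC x t ht)⟩

lemma measurable_slice (hu : IsNonlocalGrowthSolution T D ρ w₀ u) (t : ℝ) :
    Measurable fun x => u x t :=
  hu.1.comp (measurable_id.prodMk measurable_const)

lemma intervalIntegrable_kernelOp (hu : IsNonlocalGrowthSolution T D ρ w₀ u)
    (hK : IsColumnBoundedKernel volume ρ c) (x : EuclideanSpace ℝ (Fin d)) {t : ℝ}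
    (ht : t ∈ Icc 0 T) :
    IntervalIntegrable (fun s => kernelOp volume ρ (fun y => u y s) x) volume 0 t := by
  obtain ⟨C, hC⟩ := hu.exists_norm_le
  rw [intervalIntegrable_iff_integrableOn_Ioc_of_le ht.1]
  refine Measure.integrableOn_of_bounded (M := C * c) measure_Ioc_lt_top.ne
    (hK.measurable_kernelOp_param hu.1 x).aestronglyMeasurable ?_
  filter_upwards [ae_restrict_mem measurableSet_Ioc] with s hs
  exact hK.norm_kernelOp_le (fun y => hC y s ⟨hs.1.le, hs.2.trans ht.2⟩) x

lemma sub_eq_integral (hu : IsNonlocalGrowthSolution T D ρ w₀ u)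
    (hv : IsNonlocalGrowthSolution T D ρ w₀ v) (hK : IsColumnBoundedKernel volume ρ c)
    {x : EuclideanSpace ℝ (Fin d)} (hx : x ∈ D) {t : ℝ} (ht : t ∈ Icc 0 T) :
    u x t - v x t = ∫ s in (0 : ℝ)..t, kernelOp volume ρ (fun y => u y s - v y s) x := by
  obtain ⟨Cu, hCu⟩ := hu.exists_norm_le
  obtain ⟨Cv, hCv⟩ := hv.exists_norm_le
  calc u x t - v x t
      = (∫ s in (0 : ℝ)..t, kernelOp volume ρ (fun y => u y s) x)
          - ∫ s in (0 : ℝ)..t, kernelOp volume ρ (fun y => v y s) x := by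
        rw [hu.2.2.2.2.2 x hx t ht, hv.2.2.2.2.2 x hx t ht, add_sub_add_left_eq_sub]
        rfl
    _ = ∫ s in (0 : ℝ)..t, (kernelOp volume ρ (fun y => u y s) x
          - kernelOp volume ρ (fun y => v y s) x) :=
        (intervalIntegral.integral_sub (hu.intervalIntegrable_kernelOp hK x ht)
          (hv.intervalIntegrable_kernelOp hK x ht)).symm
    _ = ∫ s in (0 : ℝ)..t, kernelOp volume ρ (fun y => u y s - v y s) x := by
        refine intervalIntegral.integral_congr fun s hs => ?_
        rw [uIcc_of_le ht.1] at hs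
        have hsT : s ∈ Icc 0 T := ⟨hs.1, hs.2.trans ht.2⟩
        exact (hK.kernelOp_sub (M := max Cu Cv) (hu.measurable_slice s).aestronglyMeasurable
          (hv.measurable_slice s).aestronglyMeasurable
          (fun y => (hCu y s hsT).trans (le_max_left _ _))
          (fun y => (hCv y s hsT).trans (le_max_right _ _)) x).symm

lemma abs_sub_le_pow_div_factorial (hu : IsNonlocalGrowthSolution T D ρ w₀ u)
    (hv : IsNonlocalGrowthSolution T D ρ w₀ v) (hK : IsColumnBoundedKernel volume ρ c) :
    ∃ M, ∀ n : ℕ, ∀ x, ∀ t ∈ Icc 0 T, |u x t - v x t| ≤ M * ((c * t) ^ n / n !) := by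
  obtain ⟨Cu, hCu⟩ := hu.exists_norm_le
  obtain ⟨Cv, hCv⟩ := hv.exists_norm_le
  refine ⟨Cu + Cv, fun n => ?_⟩
  induction n with
  | zero =>
    intro x t ht
    simpa using (abs_sub _ _).trans (add_le_add (hCu x t ht) (hCv x t ht))
  | succ n ih =>
    intro x t ht
    by_cases hx : x ∈ D
    · rw [hu.sub_eq_integral hv hK hx ht, ← Real.norm_eq_abs]
      calc ‖∫ s in (0 : ℝ)..t, kernelOp volume ρ (fun y => u y s - v y s) x‖
          ≤ ∫ s in (0 : ℝ)..t, (Cu + Cv) * c ^ (n + 1) * (s ^ n / n !) := by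
            refine intervalIntegral.norm_integral_le_of_norm_le ht.1
              (ae_of_all _ fun s hs => ?_) (Continuous.intervalIntegrable (by fun_prop) _ _)
            calc _ ≤ (Cu + Cv) * ((c * s) ^ n / n !) * c :=
                  hK.norm_kernelOp_le (fun y => ih y s ⟨hs.1.le, hs.2.trans ht.2⟩) x
              _ = _ := by ring
        _ = (Cu + Cv) * ((c * t) ^ (n + 1) / (n + 1)!) := by
            rw [intervalIntegral.integral_const_mul, integral_pow_div_factorial]
            ring
    · have hM : 0 ≤ Cu + Cv :=
        add_nonneg ((norm_nonneg _).trans (hCu x t ht)) ((norm_nonneg _).trans (hCv x t ht))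
      have hct : 0 ≤ c * t := mul_nonneg hK.const_nonneg ht.1
      rw [hu.2.2.2.2.1 x hx t ht, hv.2.2.2.2.1 x hx t ht, sub_self, abs_zero]
      positivity

lemma unique (hu : IsNonlocalGrowthSolution T D ρ w₀ u) (hv : IsNonlocalGrowthSolution T D ρ w₀ v)
    (hK : IsColumnBoundedKernel volume ρ c) : ∀ x, ∀ t ∈ Icc 0 T, u x t = v x t := by
  obtain ⟨M, hM⟩ := hu.abs_sub_le_pow_div_factorial hv hK
  exact fun x t ht =>
    sub_eq_zero.mp (eq_zero_of_forall_abs_le_pow_div_factorial fun n => hM n x t ht)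

end IsNonlocalGrowthSolution

end Solution

theorem nonlocal_growth_wellposed_general {d : ℕ} (T : ℝ)
    (D : Set (EuclideanSpace ℝ (Fin d))) (hD : MeasurableSet D)
    (ρ : EuclideanSpace ℝ (Fin d) → EuclideanSpace ℝ (Fin d) → ℝ)
    (hρ_meas : Measurable (Function.uncurry ρ))
    (hρ_nonneg : ∀ x y, 0 ≤ ρ x y) (hρ_int : ∀ x, Integrable (ρ x))
    (hρ_prob : ∀ x, ∫ y, ρ x y = 1)
    (ρt : EuclideanSpace ℝ (Fin d) → ℝ) (c : ℝ)
    (hρt_int : Integrable ρt) (hρt_prob : ∫ z, ρt z = 1)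
    (hdom : ∀ x y, ρ x y ≤ c * ρt (y - x))
    (w₀ : EuclideanSpace ℝ (Fin d) → ℝ) (hw₀_meas : Measurable w₀)
    (hw₀_nonneg : ∀ x, 0 ≤ w₀ x) (hw₀_bdd : ∃ C : ℝ, ∀ x, w₀ x ≤ C)
    (hw₀_int : Integrable w₀) (hw₀_vanish : ∀ x ∉ D, w₀ x = 0) :
    ∃ u : EuclideanSpace ℝ (Fin d) → ℝ → ℝ,
      IsNonlocalGrowthSolution T D ρ w₀ u ∧
      ∀ u' : EuclideanSpace ℝ (Fin d) → ℝ → ℝ, IsNonlocalGrowthSolution T D ρ w₀ u' →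
        ∀ x, ∀ t ∈ Icc (0:ℝ) T, u x t = u' x t := by
  have hK : IsColumnBoundedKernel volume ρ c :=
    .of_le_comp_sub hρ_meas hρ_nonneg hρt_int hρt_prob hdom
  obtain ⟨C, hw₀_le⟩ := hw₀_bdd
  have hu := isNonlocalGrowthSolution_picardSeries (T := T) hK hD hρ_int hρ_prob hw₀_meas
    hw₀_nonneg hw₀_le hw₀_int hw₀_vanish
  exact ⟨_, hu, fun _ hv => hu.unique hv hK⟩

/-- Well-posedness of the linear nonlocal growth equation on a fixed domain `D`
with absorption outside `D`: existence and uniqueness (on `ℝ^d × [0,T]`). -/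
theorem nonlocal_growth_wellposed {d : ℕ} (T : ℝ) (hT : 0 < T)
    (D : Set (EuclideanSpace ℝ (Fin d))) (hD : MeasurableSet D)
    (ρ : EuclideanSpace ℝ (Fin d) → EuclideanSpace ℝ (Fin d) → ℝ)
    (hρ_meas : Measurable (Function.uncurry ρ))
    (hρ_nonneg : ∀ x y, 0 ≤ ρ x y) (hρ_int : ∀ x, Integrable (ρ x))
    (hρ_prob : ∀ x, ∫ y, ρ x y = 1)
    (ρt : EuclideanSpace ℝ (Fin d) → ℝ) (c : ℝ)
    (hρt_nonneg : ∀ z, 0 ≤ ρt z) (hρt_int : Integrable ρt) (hρt_prob : ∫ z, ρt z = 1)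
    (hdom : ∀ x y, ρ x y ≤ c * ρt (y - x))
    (w₀ : EuclideanSpace ℝ (Fin d) → ℝ) (hw₀_meas : Measurable w₀)
    (hw₀_nonneg : ∀ x, 0 ≤ w₀ x) (hw₀_bdd : ∃ C : ℝ, ∀ x, w₀ x ≤ C)
    (hw₀_int : Integrable w₀) (hw₀_vanish : ∀ x ∉ D, w₀ x = 0) :
    ∃ u : EuclideanSpace ℝ (Fin d) → ℝ → ℝ,
      IsNonlocalGrowthSolution T D ρ w₀ u ∧
      ∀ u' : EuclideanSpace ℝ (Fin d) → ℝ → ℝ, IsNonlocalGrowthSolution T D ρ w₀ u' →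
        ∀ x, ∀ t ∈ Icc (0:ℝ) T, u x t = u' x t :=
  nonlocal_growth_wellposed_general T D hD ρ hρ_meas hρ_nonneg hρ_int hρ_prob ρt c hρt_int hρt_prob
    hdom w₀ hw₀_meas hw₀_nonneg hw₀_bdd hw₀_int hw₀_vanish
end
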